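/- arXiv:2601.03643 — 5 statements merged into one kernel-verified Lean document; each statement's English description precedes it below -/
import Mathlib

section
/- If G is a simple graph on vertex set V, then G fails to be k-connected if and only if either |V| ≤ k, or there exists a partition of V into three sets S, C, T with S and T nonempty, |C| < k, and no edge of G joining a vertex of S to a vertex of T. -/
open SimpleGraph

/-- The interior (internal vertices) of a walk from `u` to `v`. -/
def SimpleGraph.Walk.interior {V : Type*} {G : SimpleGraph V} {u v : V} (p : G.Walk u v) :
    Set V := {x | x ∈ p.support ∧ x ≠ u ∧ x ≠ v}

/-- The maximum number of pairwise internally disjoint `u`-`v` paths in `G`. -/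
noncomputable def localKappa {V : Type*} (G : SimpleGraph V) (u v : V) : ℕ :=
  sSup {m | ∃ P : Fin m → G.Path u v, Function.Injective P ∧
    ∀ i j, i ≠ j → (P i : G.Walk u v).interior ∩ (P j : G.Walk u v).interior = ∅}

/-- The connectivity of `G`: minimum over ordered pairs of distinct vertices. -/
noncomputable def graphKappa {V : Type*} (G : SimpleGraph V) : ℕ :=
  sInf {m | ∃ s t : V, s ≠ t ∧ m = localKappa G s t}

/-- A directed path from `u` to `v` in the digraph given by the relation `A`. -/
structure DiPath {R : Type*} (A : R → R → Prop) (u v : R) where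
  verts : List R
  chain : List.Chain A u verts
  ends : (u :: verts).getLast (List.cons_ne_nil u verts) = v
  nodup : (u :: verts).Nodup

/-- The interior (internal vertices) of a directed path. -/
def DiPath.interior {R : Type*} {A : R → R → Prop} {u v : R} (P : DiPath A u v) : Set R :=
  {x | x ∈ u :: P.verts ∧ x ≠ u ∧ x ≠ v}

/-- The maximum number of pairwise internally disjoint directed `u`-`v` paths. -/
noncomputable def diKappa {R : Type*} (A : R → R → Prop) (u v : R) : ℕ :=
  sSup {m | ∃ P : Fin m → DiPath A u v, Function.Injective P ∧
    ∀ i j, i ≠ j → (P i).interior ∩ (P j).interior = ∅}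

/-- The connectivity of a digraph. -/
noncomputable def diGraphKappa {R : Type*} (A : R → R → Prop) : ℕ :=
  sInf {m | ∃ s t : R, s ≠ t ∧ m = diKappa A s t}

/-- A digraph (relation) is acyclic: no directed cycle. -/
def DiAcyclic {R : Type*} (A : R → R → Prop) : Prop := ∀ u, ¬ Relation.TransGen A u u

/-- The connectivity-shift graph of the digraph `A` on `R`, on vertex set `R ⊕ R`:
cliques on both copies, the matching, and an edge `(inl u, inr v)` for each arc `uv`. -/
def shiftGraph {R : Type*} (A : R → R → Prop) : SimpleGraph (R ⊕ R) where
  Adj x y := match x, y with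
    | .inl u, .inl v => u ≠ v
    | .inr u, .inr v => u ≠ v
    | .inl u, .inr v => A u v ∨ u = v
    | .inr v, .inl u => A u v ∨ u = v
  symm := ⟨by rintro (u|u) (v|v) h <;> simp_all <;> tauto⟩
  loopless := ⟨by rintro (u|u) h <;> simp_all⟩

/-- `G` is `k`-connected: more than `k` vertices, and removing fewer than `k`
vertices leaves a connected graph. -/
def IsKConnected {V : Type*} [Fintype V] (G : SimpleGraph V) (k : ℕ) : Prop :=
  k < Fintype.card V ∧ ∀ C : Finset V, C.card < k →
    (G.induce ((↑C : Set V)ᶜ)).Connected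

/-- The combined graph: `p` connectivity-shift gadgets sharing the common clique on `R`. -/
def combGraph {R : Type*} (p : ℕ) (A : Fin p → R → R → Prop) :
    SimpleGraph (R ⊕ Fin p × R) where
  Adj x y := match x, y with
    | .inl u, .inl v => u ≠ v
    | .inl u, .inr (i, v) => A i u v ∨ u = v
    | .inr (i, v), .inl u => A i u v ∨ u = v
    | .inr (i, u), .inr (j, v) => i = j ∧ u ≠ v
  symm := ⟨by rintro (u|⟨i,u⟩) (v|⟨j,v⟩) h <;> simp_all <;> tauto⟩
  loopless := ⟨by rintro (u|⟨i,u⟩) h <;> simp_all⟩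

/-- `G` fails to be `k`-connected iff `|V| ≤ k` or there is a
partition `S, C, T` of `V` with `S, T` nonempty, `|C| < k`, and no `S`-`T` edge. -/
theorem stmt0 {V : Type*} [Fintype V] [DecidableEq V] (G : SimpleGraph V) (k : ℕ) :
    ¬ IsKConnected G k ↔
      Fintype.card V ≤ k ∨
      ∃ S C T : Finset V, Disjoint S C ∧ Disjoint S T ∧ Disjoint C T ∧
        S ∪ C ∪ T = Finset.univ ∧ S.Nonempty ∧ T.Nonempty ∧ C.card < k ∧
        ∀ s ∈ S, ∀ t ∈ T, ¬ G.Adj s t := by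
  classical
  constructor
  · intro h
    by_cases hc : Fintype.card V ≤ k
    · exact Or.inl hc
    push_neg at hc
    right
    rw [IsKConnected] at h
    push_neg at h
    obtain ⟨C, hCk, hnc⟩ := h hc
    -- the complement is nonempty
    have hCne : ∃ v, v ∉ C := by
      by_contra h'
      push_neg at h'
      have h2 : C = Finset.univ := Finset.eq_univ_iff_forall.mpr h'
      rw [h2, Finset.card_univ] at hCk
      omega
    obtain ⟨v0, hv0⟩ := hCne
    have hv0' : v0 ∈ ((↑C : Set V)ᶜ) := by simpa using hv0
    have hne : Nonempty ((↑C : Set V)ᶜ : Set V) := ⟨⟨v0, hv0'⟩⟩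
    have hnp : ¬ (G.induce ((↑C : Set V)ᶜ)).Preconnected := fun pc => hnc { preconnected := pc, nonempty := hne }
    rw [SimpleGraph.Preconnected] at hnp
    push_neg at hnp
    obtain ⟨a, b, hab⟩ := hnp
    set S : Finset V := Finset.univ.filter
      (fun v => ∃ hv : v ∈ ((↑C : Set V)ᶜ), (G.induce ((↑C : Set V)ᶜ)).Reachable a ⟨v, hv⟩)
      with hSdef
    have hmemS : ∀ v, v ∈ S ↔ ∃ hv : v ∈ ((↑C : Set V)ᶜ),
        (G.induce ((↑C : Set V)ᶜ)).Reachable a ⟨v, hv⟩ := by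
      intro v; simp [hSdef]
    set T : Finset V := Cᶜ \ S with hTdef
    have hTsub : ∀ v ∈ T, v ∉ C ∧ v ∉ S := by
      intro v hv
      rw [hTdef, Finset.mem_sdiff, Finset.mem_compl] at hv
      exact hv
    refine ⟨S, C, T, ?_, ?_, ?_, ?_, ?_, ?_, hCk, ?_⟩
    · rw [Finset.disjoint_left]
      intro v hv hvC
      obtain ⟨hv', _⟩ := (hmemS v).mp hv
      simp at hv'
      exact hv' hvC
    · exact Finset.disjoint_sdiff
    · rw [Finset.disjoint_left]
      intro v hvC hvT
      exact (hTsub v hvT).1 hvC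
    · apply Finset.eq_univ_iff_forall.mpr
      intro v
      by_cases hvC : v ∈ C
      · simp [hvC]
      by_cases hvS : v ∈ S
      · simp [hvS]
      · have : v ∈ T := by
          rw [hTdef, Finset.mem_sdiff, Finset.mem_compl]; exact ⟨hvC, hvS⟩
        simp [this]
    · refine ⟨a.val, (hmemS _).mpr ⟨a.prop, ?_⟩⟩
      exact SimpleGraph.Reachable.refl _
    · refine ⟨b.val, ?_⟩
      rw [hTdef, Finset.mem_sdiff, Finset.mem_compl]
      constructor
      · exact fun h => b.prop (Finset.mem_coe.mpr h)
      · intro hb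
        obtain ⟨hb', hr⟩ := (hmemS _).mp hb
        exact hab (by convert hr using 2)
    · intro s hs t ht hadj
      obtain ⟨hs', hr⟩ := (hmemS s).mp hs
      obtain ⟨htC, htS⟩ := hTsub t ht
      have ht' : t ∈ ((↑C : Set V)ᶜ) := by simpa using htC
      have hadj' : (G.induce ((↑C : Set V)ᶜ)).Adj ⟨s, hs'⟩ ⟨t, ht'⟩ := by
        simp [SimpleGraph.comap_adj, hadj]
      exact htS ((hmemS t).mpr ⟨ht', hr.trans hadj'.reachable⟩)
  · rintro (hcard | ⟨S, C, T, hSC, hST, hCT, huniv, ⟨s, hs⟩, ⟨t, ht⟩, hCk, hedge⟩)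
    · rintro ⟨hk, -⟩; omega
    rintro ⟨hk, hconn⟩
    have hc := hconn C hCk
    have hsC : s ∉ C := Finset.disjoint_left.mp hSC hs
    have htC : t ∉ C := fun h => Finset.disjoint_left.mp hCT h ht
    have hs' : s ∈ ((↑C : Set V)ᶜ) := by simpa using hsC
    have ht' : t ∈ ((↑C : Set V)ᶜ) := by simpa using htC
    have hmem : ∀ v, v ∉ C → v ∈ S ∨ v ∈ T := by
      intro v hvC
      have : v ∈ S ∪ C ∪ T := huniv ▸ Finset.mem_univ v
      rw [Finset.mem_union, Finset.mem_union] at this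
      tauto
    have hr : (G.induce ((↑C : Set V)ᶜ)).Reachable ⟨s, hs'⟩ ⟨t, ht'⟩ :=
      hc.preconnected _ _
    have key : ∀ (x y : ((↑C : Set V)ᶜ : Set V))
        (_ : (G.induce ((↑C : Set V)ᶜ)).Walk x y), x.val ∈ S → y.val ∈ S := by
      intro x y w
      induction w with
      | nil => exact id
      | cons h p ih =>
        rename_i u z _
        intro hu
        apply ih
        have hadj : G.Adj u.val z.val := h
        have hzC : z.val ∉ C := fun h => z.prop (Finset.mem_coe.mpr h)
        rcases hmem z.val hzC with hz | hz
        · exact hz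
        · exact absurd hadj (hedge _ hu _ hz)
    obtain ⟨w⟩ := hr
    exact Finset.disjoint_left.mp hST (key _ _ w hs) ht
end

section
/- Let D = (R, A) be a digraph and G its connectivity-shift graph. Then for all u, v ∈ R with u ≠ v, the maximum number of internally disjoint paths in G between u and v' equals κ_D(u,v) + |R|, where κ_D(u,v) is the maximum number of internally disjoint directed u-v paths in D. -/
open SimpleGraph

section MyGen

variable {α : Type*} {r : α → α → Prop}

lemma exists_nodup_chain {a b : α} (h : Relation.ReflTransGen r a b) :
    ∃ l : List α, List.Chain r a l ∧ (a::l).getLast (List.cons_ne_nil a l) = b ∧ (a::l).Nodup := by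
  induction h using Relation.ReflTransGen.head_induction_on with
  | refl => exact ⟨[], .nil, rfl, by simp⟩
  | head hac _ ih =>
    rename_i a c _
    obtain ⟨l, hchain, hlast, hnd⟩ := ih
    by_cases hmem : a ∈ c :: l
    · obtain ⟨s, t, hst⟩ := List.append_of_mem hmem
      have hsuf : (a :: t) <:+ (c :: l) := ⟨s, hst.symm⟩
      refine ⟨t, ?_, ?_, ?_⟩
      · have : List.Chain' r (c :: l) := hchain
        exact (this.suffix hsuf)
      · have := (List.getLast_append_right (l := s) (l' := a :: t) (List.cons_ne_nil a t)).symm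
        rw [← hlast]
        simp_rw [hst]
        exact this.symm ▸ rfl
      · exact hnd.sublist hsuf.sublist
    · exact ⟨c :: l, hchain.cons hac, by rwa [List.getLast_cons (List.cons_ne_nil c l)], by
        exact List.nodup_cons.mpr ⟨hmem, hnd⟩⟩

lemma orbits_eq (hinj : ∀ {x y z}, r x z → r y z → x = y) {b b' x : α}
    (hb : ∀ y, ¬ r y b) (hb' : ∀ y, ¬ r y b')
    (h1 : Relation.ReflTransGen r b x) (h2 : Relation.ReflTransGen r b' x) : b = b' := by
  induction h1 with
  | refl =>
    rcases h2.cases_tail with h | ⟨c, _, hc⟩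
    · exact h
    · exact absurd hc (hb c)
  | tail h1 hyx ih =>
    rcases h2.cases_tail with h | ⟨c, hc, hcx⟩
    · exact absurd (h ▸ hyx) (hb' _)
    · exact ih (hinj hyx hcx ▸ hc)

lemma reach_absorb [Fintype α] {v : α}
    (hinj : ∀ {x y z}, z ≠ v → r x z → r y z → x = y)
    {b : α} (hb : ∀ y, ¬ r y b) :
    ∃ x, Relation.ReflTransGen (fun p q => r p q ∧ q ≠ v) b x ∧ (r x v ∨ ∀ y, ¬ r x y) := by
  classical
  by_contra hcon
  push_neg at hcon
  set T := fun p q => r p q ∧ q ≠ v with hT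
  have hcon' : ∀ x, Relation.ReflTransGen T b x → ¬ r x v ∧ ∃ y, r x y := by
    intro x hx
    have := hcon x hx
    exact ⟨this.1, this.2⟩
  let S : Finset α := Finset.univ.filter (fun x => Relation.ReflTransGen T b x)
  have hbS : b ∈ S := by simp only [S, Finset.mem_filter]; exact ⟨Finset.mem_univ _, .refl⟩
  let f : α → α := fun x => if h : ∃ y, r x y then h.choose else x
  have hf : ∀ x ∈ S, r x (f x) := by
    intro x hx
    simp only [S, Finset.mem_filter] at hx
    obtain ⟨-, hy⟩ := hcon' x hx.2
    simp only [f, dif_pos hy]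
    exact hy.choose_spec
  have hmaps : ∀ x ∈ S, f x ∈ S.erase b := by
    intro x hx
    have hrx := hf x hx
    simp only [S, Finset.mem_filter] at hx ⊢
    have hne : f x ≠ v := by
      intro h
      exact (hcon' x hx.2).1 (h ▸ hrx)
    refine Finset.mem_erase.mpr ⟨fun h => hb x (h ▸ hrx), by
      simp only [S, Finset.mem_filter]
      exact ⟨Finset.mem_univ _, hx.2.tail ⟨hrx, hne⟩⟩⟩
  have hinjon : Set.InjOn f S := by
    intro x hx y hy hxy
    have hxS : Relation.ReflTransGen T b x := by
      have hx' : x ∈ S := hx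
      simp only [S, Finset.mem_filter] at hx'; exact hx'.2
    have hnev : f x ≠ v := fun h => (hcon' x hxS).1 (h ▸ hf x hx)
    exact hinj hnev (hf x hx) (hxy ▸ hf y hy)
  have hcard := Finset.card_le_card_of_injOn f hmaps hinjon
  have : (S.erase b).card < S.card := Finset.card_erase_lt_of_mem hbS
  omega

lemma chain_reaches {a : α} {l : List α} (h : List.Chain r a l) :
    ∀ x ∈ a :: l, Relation.ReflTransGen r a x ∧
      Relation.ReflTransGen r x ((a::l).getLast (List.cons_ne_nil a l)) := by
  induction l generalizing a with
  | nil => intro x hx; simp at hx; subst hx; exact ⟨.refl, .refl⟩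
  | cons c l ih =>
    rcases List.chain_cons.mp h with ⟨hac, hcl⟩
    intro x hx
    have hlast : (a :: c :: l).getLast (List.cons_ne_nil _ _) =
        (c :: l).getLast (List.cons_ne_nil _ _) := List.getLast_cons _
    rcases List.mem_cons.mp hx with rfl | hx'
    · refine ⟨.refl, hlast ▸ ((ih hcl c (by simp)).2.head hac)⟩
    · obtain ⟨h1, h2⟩ := ih hcl x hx'
      exact ⟨h1.head hac, hlast ▸ h2⟩



end MyGen

section SG
variable {R : Type*} {A : R → R → Prop}

lemma sg_adj_ll {a b : R} : (shiftGraph A).Adj (.inl a) (.inl b) ↔ a ≠ b := Iff.rfl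
lemma sg_adj_rr {a b : R} : (shiftGraph A).Adj (.inr a) (.inr b) ↔ a ≠ b := Iff.rfl
lemma sg_adj_lr {a b : R} : (shiftGraph A).Adj (.inl a) (.inr b) ↔ A a b ∨ a = b := Iff.rfl
lemma sg_adj_rl {a b : R} : (shiftGraph A).Adj (.inr b) (.inl a) ↔ A a b ∨ a = b := Iff.rfl

lemma eq_of_length_one {V : Type*} {G : SimpleGraph V} {x y : V} {p q : G.Walk x y}
    (hp : p.length = 1) (hq : q.length = 1) : p = q := by
  cases p with
  | nil => simp at hp
  | cons h p' =>
    cases p' with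
    | cons h2 p'' => simp [Walk.length_cons] at hp
    | nil =>
      cases q with
      | nil => simp at hq
      | cons h' q' =>
        cases q' with
        | cons h2 q'' => simp [Walk.length_cons] at hq
        | nil => rfl

lemma firstCross_aux {v : R} {x y : R ⊕ R} (p : (shiftGraph A).Walk x y)
    (hy : y = .inr v) (hp : p.IsPath) :
    ∀ a₀ : R, x = .inl a₀ →
      ∃ a b, (A a b ∨ a = b) ∧ Sum.inl a ∈ p.support ∧ Sum.inr b ∈ p.support ∧
        ((a = a₀ ∧ b = v) → p.length = 1) := by
  induction p with
  | nil =>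
    rintro a₀ rfl
    exact absurd hy (by simp)
  | @cons s w t h q ih =>
    rintro a₀ rfl
    subst hy
    match w, h with
    | .inr b, h =>
      refine ⟨a₀, b, h, by simp [Walk.support_cons], by simp [Walk.support_cons, Walk.start_mem_support], ?_⟩
      rintro ⟨-, rfl⟩
      have : q.length = 0 := by
        have hqp : q.IsPath := hp.of_cons
        rw [(Walk.isPath_iff_eq_nil (p := q)).mp hqp]
        rfl
      simp [Walk.length_cons, this]
    | .inl a₁, h =>
      obtain ⟨a, b, h1, h2, h3, _⟩ := ih rfl hp.of_cons a₁ rfl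
      refine ⟨a, b, h1, by simp [Walk.support_cons, h2], by simp [Walk.support_cons, h3], ?_⟩
      rintro ⟨rfl, rfl⟩
      exfalso
      have hnd := hp.support_nodup
      rw [Walk.support_cons] at hnd
      exact (List.nodup_cons.mp hnd).1 h2
end SG

section Helpers
variable {α : Type*}

lemma list_single {x a : α} {t : List α} (hnd : (a :: t).Nodup) (ht : t ≠ [])
    (hlast : (a :: t).getLast (List.cons_ne_nil a t) = x) (hhead : t.head ht = x) :
    t = [x] := by
  obtain ⟨y, t', rfl⟩ := List.exists_cons_of_ne_nil ht
  have hyx : y = x := hhead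
  subst hyx
  cases t' with
  | nil => rfl
  | cons z t'' =>
    exfalso
    have h1 : (a :: y :: z :: t'').getLast (List.cons_ne_nil _ _) =
        (y :: z :: t'').getLast (List.cons_ne_nil _ _) := List.getLast_cons _
    have h2 : (y :: z :: t'').getLast (List.cons_ne_nil _ _) =
        (z :: t'').getLast (List.cons_ne_nil _ _) := List.getLast_cons _
    have hx : y ∈ z :: t'' := by
      have h3 := hlast
      rw [h1, h2] at h3
      rw [← h3]
      exact List.getLast_mem _
    have := hnd.of_cons
    rw [List.nodup_cons] at this
    exact this.1 hx

lemma chain_append_last {r s : α → α → Prop} (himp : ∀ x y, r x y → s x y) {c w : α}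
    (hcw : s c w) :
    ∀ {a : α} (l : List α), List.Chain r a l →
      (a :: l).getLast (List.cons_ne_nil a l) = c → List.Chain s a (l ++ [w]) := by
  intro a l
  induction l generalizing a with
  | nil =>
    intro _ hl
    obtain rfl : a = c := hl
    exact List.chain_cons.mpr ⟨hcw, List.Chain.nil⟩
  | cons y t ih =>
    intro hch hl
    rcases List.chain_cons.mp hch with ⟨hay, hyt⟩
    refine List.chain_cons.mpr ⟨himp _ _ hay, ih hyt ?_⟩
    rwa [List.getLast_cons (List.cons_ne_nil y t)] at hl

end Helpers

section DP
variable {R : Type*} {A : R → R → Prop} {u v : R}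

lemma DiPath.verts_ne_nil (huv : u ≠ v) (d : DiPath A u v) : d.verts ≠ [] := by
  intro h
  have := d.ends
  rw [h] at this
  exact huv (by simpa using this)

lemma DiPath.u_not_mem_verts (d : DiPath A u v) : u ∉ d.verts :=
  (List.nodup_cons.mp d.nodup).1

lemma DiPath.eq_of_verts_eq {d d' : DiPath A u v} (h : d.verts = d'.verts) : d = d' := by
  cases d; cases d'; cases h; rfl

lemma DiPath.verts_eq_single (huv : u ≠ v) (d : DiPath A u v)
    (h : d.verts.head (d.verts_ne_nil huv) = v) : d.verts = [v] :=
  list_single d.nodup (d.verts_ne_nil huv) d.ends h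

lemma DiPath.head_mem_interior (huv : u ≠ v) (d : DiPath A u v)
    (h : d.verts.head (d.verts_ne_nil huv) ≠ v) :
    d.verts.head (d.verts_ne_nil huv) ∈ d.interior := by
  refine ⟨List.mem_cons_of_mem _ (List.head_mem _), fun he => ?_, h⟩
  have hm := List.head_mem (d.verts_ne_nil huv)
  rw [he] at hm
  exact d.u_not_mem_verts hm

lemma diKappa_bddAbove [Fintype R] (huv : u ≠ v) :
    BddAbove {m | ∃ P : Fin m → DiPath A u v, Function.Injective P ∧
      ∀ i j, i ≠ j → (P i).interior ∩ (P j).interior = ∅} := by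
  refine ⟨Fintype.card R, fun k hk => ?_⟩
  obtain ⟨P, hinj, hdis⟩ := hk
  have : Function.Injective (fun i => (P i).verts.head ((P i).verts_ne_nil huv)) := by
    intro i j hij
    simp only at hij
    by_cases hv : (P i).verts.head ((P i).verts_ne_nil huv) = v
    · have h1 := (P i).verts_eq_single huv hv
      have h2 := (P j).verts_eq_single huv (by rw [← hij]; exact hv)
      exact hinj (DiPath.eq_of_verts_eq (h1.trans h2.symm))
    · by_contra hne
      have h1 := (P i).head_mem_interior huv hv
      have h2 := (P j).head_mem_interior huv (fun hc => hv (by rw [hij, hc]))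
      rw [← hij] at h2
      have := hdis i j hne
      rw [Set.eq_empty_iff_forall_notMem] at this
      exact this _ ⟨h1, h2⟩
  simpa using Fintype.card_le_of_injective _ this

end DP

section PartB
variable {R : Type*} [Fintype R] {A : R → R → Prop} {u v : R}

lemma localKappa_mem_le (huv : u ≠ v) {N : ℕ}
    (Q : Fin N → (shiftGraph A).Path (Sum.inl u) (Sum.inr v))
    (hQinj : Function.Injective Q)
    (hQdis : ∀ i j, i ≠ j →
      ((Q i : (shiftGraph A).Walk (Sum.inl u) (Sum.inr v)).interior ∩
        (Q j : (shiftGraph A).Walk (Sum.inl u) (Sum.inr v)).interior) = ∅) :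
    N ≤ diKappa A u v + Fintype.card R := by
  classical
  have htok := fun i : Fin N => firstCross_aux ((Q i) : (shiftGraph A).Walk (Sum.inl u) (Sum.inr v)) rfl (Q i).2 u rfl
  choose a b hab haS hbS hlen using htok
  have hdisj : ∀ {i j : Fin N} (x), i ≠ j → x ∈ ((Q i) : (shiftGraph A).Walk (Sum.inl u) (Sum.inr v)).interior →
      x ∈ ((Q j) : (shiftGraph A).Walk (Sum.inl u) (Sum.inr v)).interior → False := by
    intro i j x hij h1 h2
    have h := hQdis i j hij
    rw [Set.eq_empty_iff_forall_notMem] at h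
    exact h x ⟨h1, h2⟩
  have hintL : ∀ i, a i ≠ u → Sum.inl (a i) ∈ ((Q i) : (shiftGraph A).Walk (Sum.inl u) (Sum.inr v)).interior :=
    fun i h => ⟨haS i, by simp [h], by simp⟩
  have hintR : ∀ i, b i ≠ v → Sum.inr (b i) ∈ ((Q i) : (shiftGraph A).Walk (Sum.inl u) (Sum.inr v)).interior :=
    fun i h => ⟨hbS i, by simp, by simp [h]⟩
  have hA1 : ∀ i j, a i = a j → a i ≠ u → i = j := by
    intro i j he hne
    by_contra hij
    refine hdisj _ hij (hintL i hne) ?_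
    rw [he] at hne ⊢
    exact hintL j hne
  have hB1 : ∀ i j, b i = b j → b i ≠ v → i = j := by
    intro i j he hne
    by_contra hij
    refine hdisj _ hij (hintR i hne) ?_
    rw [he] at hne ⊢
    exact hintR j hne
  set S : R → R → Prop := fun x y => x ≠ u ∧ x ≠ y ∧ ∃ i, a i = x ∧ b i = y with hSdef
  set T : R → R → Prop := fun x y => S x y ∧ y ≠ v with hTdef
  have hSA : ∀ {x y}, S x y → A x y := by
    rintro x y ⟨hxu, hxy, i, rfl, rfl⟩
    rcases hab i with h | h
    · exact h
    · exact absurd h hxy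
  have hTinj : ∀ {x y z : R}, T x z → T y z → x = y := by
    rintro x y z ⟨⟨hxu, hxz, i, hai, hbi⟩, hzv⟩ ⟨⟨hyu, hyz, j, haj, hbj⟩, -⟩
    have hij : i = j := hB1 i j (by rw [hbi, hbj]) (by rw [hbi]; exact hzv)
    rw [← hai, ← haj, hij]
  have hnopre : ∀ x, (∃ i, a i = u ∧ b i = x) → x ≠ v → ∀ y, ¬ S y x := by
    rintro x ⟨i, hai, hbi⟩ hxv y ⟨hyu, hyx, j, haj, hbj⟩
    have hij : j = i := hB1 j i (by rw [hbj, hbi]) (by rw [hbj]; exact hxv)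
    rw [hij, hai] at haj
    exact hyu haj.symm
  -- `good` starting points
  set good : R → Prop := fun x => ∃ c, Relation.ReflTransGen T x c ∧ S c v with hgooddef
  have hgood_ne_u : ∀ x, good x → x ≠ u := by
    rintro x ⟨c, hc, hcv⟩ rfl
    rcases hc.cases_head with rfl | ⟨y, ⟨⟨hy, -, -⟩, -⟩, -⟩
    · exact hcv.1 rfl
    · exact hy rfl
  set M : Finset (Fin N) := Finset.univ.filter (fun i => a i = u ∧ (b i = v ∨ good (b i)))
    with hMdef
  -- dead points for non-good starts
  have hdead' : ∀ i : Fin N, ∃ x : R, (a i = u ∧ b i ≠ v) →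
      (Relation.ReflTransGen T (b i) x ∧ (S x v ∨ ∀ y, ¬ S x y)) := by
    intro i
    by_cases h : a i = u ∧ b i ≠ v
    · obtain ⟨c, hc⟩ := reach_absorb (r := S) (v := v)
        (fun hzv h1 h2 => hTinj ⟨h1, hzv⟩ ⟨h2, hzv⟩)
        (hnopre (b i) ⟨i, h.1, rfl⟩ h.2)
      exact ⟨c, fun _ => hc⟩
    · exact ⟨u, fun hh => absurd hh h⟩
  choose dead hdead using hdead'
  have hdead_ne_v : ∀ i, a i = u → b i ≠ v → dead i ≠ v := by
    intro i h1 h2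
    rcases (hdead i ⟨h1, h2⟩).1.cases_tail with he | ⟨c, -, hT⟩
    · rw [he]; exact h2
    · exact hT.2
  have hdead_nosucc : ∀ i, a i = u → b i ≠ v → ¬ good (b i) → ∀ y, ¬ S (dead i) y := by
    intro i h1 h2 h3
    rcases (hdead i ⟨h1, h2⟩).2 with h | h
    · exact absurd ⟨dead i, (hdead i ⟨h1, h2⟩).1, h⟩ h3
    · exact h
  have hMmem : ∀ i, i ∈ M ↔ (a i = u ∧ (b i = v ∨ good (b i))) := by
    intro i
    rw [hMdef]
    simp [Finset.mem_filter]
  set φ : Fin N → R := fun i => if a i = u then dead i else a i with hφdef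
  have hkey : ∀ j i : Fin N, j ∉ M → a j = u → a i ≠ u → a i = dead j → False := by
    intro j i hj haj hai h2
    rw [hMmem] at hj
    have hj' : b j ≠ v ∧ ¬ good (b j) := by
      by_contra hc
      push_neg at hc
      rcases Classical.em (b j = v) with h | h
      · exact hj ⟨haj, Or.inl h⟩
      · exact hj ⟨haj, Or.inr (hc h)⟩
    have hnosucc := hdead_nosucc j haj hj'.1 hj'.2
    by_cases hbi : b i = a i
    · -- token (a i, a i)
      have hxv : a i ≠ v := by rw [h2]; exact hdead_ne_v j haj hj'.1
      rcases (hdead j ⟨haj, hj'.1⟩).1.cases_tail with he | ⟨c, -, hT⟩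
      · -- dead j = b j, so a i = b j
        have hbij : b i = b j := by rw [hbi, h2, he]
        have hij : i ≠ j := fun h => hai (h ▸ haj)
        have m1 := hintR i (by rw [hbi]; exact hxv)
        have m2 := hintR j (by rw [← hbij, hbi]; exact hxv)
        rw [← hbij] at m2
        exact hdisj _ hij m1 m2
      · -- a step S c (dead j) with c ≠ dead j
        obtain ⟨⟨hcu, hcx, k, hak, hbk⟩, -⟩ := hT
        have hk : k = i := hB1 k i (by rw [hbk, ← h2, ← hbi]) (by rw [hbk]; exact hdead_ne_v j haj hj'.1)
        rw [hk] at hak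
        exact hcx (by rw [← hak, h2])
    · exact hnosucc (b i) (by rw [← h2]; exact ⟨hai, fun h => hbi h.symm, i, rfl, rfl⟩)
  have hinjOn : Set.InjOn φ (Mᶜ : Finset (Fin N)) := by
    intro i hi j hj hφ
    have hi' : i ∉ M := by simpa using (Finset.mem_coe.mp hi)
    have hj' : j ∉ M := by simpa using (Finset.mem_coe.mp hj)
    by_cases hai : a i = u <;> by_cases haj : a j = u
    · -- both dead charges
      simp only [hφdef, if_pos hai, if_pos haj] at hφ
      have hbi : b i ≠ v ∧ ¬ good (b i) := by
        rw [hMmem] at hi'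
        by_contra hc
        push_neg at hc
        rcases Classical.em (b i = v) with h | h
        · exact hi' ⟨hai, Or.inl h⟩
        · exact hi' ⟨hai, Or.inr (hc h)⟩
      have hbj : b j ≠ v ∧ ¬ good (b j) := by
        rw [hMmem] at hj'
        by_contra hc
        push_neg at hc
        rcases Classical.em (b j = v) with h | h
        · exact hj' ⟨haj, Or.inl h⟩
        · exact hj' ⟨haj, Or.inr (hc h)⟩
      have hbb : b i = b j := by
        have r2 := (hdead j ⟨haj, hbj.1⟩).1
        rw [← hφ] at r2
        refine orbits_eq (r := T) (fun h h' => hTinj h h') ?_ ?_ (hdead i ⟨hai, hbi.1⟩).1 r2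
        · exact fun y hy => hnopre (b i) ⟨i, hai, rfl⟩ hbi.1 y hy.1
        · exact fun y hy => hnopre (b j) ⟨j, haj, rfl⟩ hbj.1 y hy.1
      exact hB1 i j hbb hbi.1
    · simp only [hφdef, if_pos hai, if_neg haj] at hφ
      exact absurd hφ.symm (fun h => hkey i j hi' hai haj h)
    · simp only [hφdef, if_neg hai, if_pos haj] at hφ
      exact absurd hφ (fun h => hkey j i hj' haj hai h)
    · simp only [hφdef, if_neg hai, if_neg haj] at hφ
      exact hA1 i j hφ hai
  have hcard1 : N ≤ M.card + Fintype.card R := by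
    have h1 : Mᶜ.card ≤ Fintype.card R := by
      have := Finset.card_le_card_of_injOn φ (fun x _ => Finset.mem_univ (φ x)) hinjOn
      simpa using this
    have h2 : Mᶜ.card + M.card = N := by
      have := Finset.card_compl_add_card M
      simpa using this
    omega
  -- Claim 2 : dipaths from M
  have hDP : ∀ i : Fin N, i ∈ M → ∃ d : DiPath A u v,
      (b i = v → d.verts = [v]) ∧
      (b i ≠ v → d.verts.head? = some (b i)) ∧
      (∀ x : R, x ∈ d.interior → Relation.ReflTransGen T (b i) x) ∧
      (b i = v → d.interior = ∅) := by
    intro i hi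
    rw [hMmem] at hi
    obtain ⟨hai, hbi⟩ := hi
    by_cases hv : b i = v
    · have hch : List.Chain A u [v] := by
        refine List.chain_cons.mpr ⟨?_, List.Chain.nil⟩
        rcases hab i with h | h
        · rwa [hai, hv] at h
        · rw [hai, hv] at h; exact absurd h huv
      refine ⟨⟨[v], hch, rfl, by simp [huv]⟩, fun _ => rfl, fun h => absurd hv h, ?_, fun _ => ?_⟩
      · intro x hx
        exfalso
        obtain ⟨hm, h1, h2⟩ := hx
        rcases List.mem_cons.mp hm with rfl | hm'
        · exact h1 rfl
        · rcases List.mem_singleton.mp hm' with rfl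
          exact h2 rfl
      · rw [Set.eq_empty_iff_forall_notMem]
        rintro x ⟨hm, h1, h2⟩
        rcases List.mem_cons.mp hm with rfl | hm'
        · exact h1 rfl
        · rcases List.mem_singleton.mp hm' with rfl
          exact h2 rfl
    · obtain ⟨c, hc, hcv⟩ := hbi.resolve_left hv
      obtain ⟨l, hch, hlast, hnd⟩ := exists_nodup_chain hc
      have hreach : ∀ x ∈ b i :: l, Relation.ReflTransGen T (b i) x ∧
          Relation.ReflTransGen T x c := by
        intro x hx
        have h := chain_reaches hch x hx
        rwa [hlast] at h
      have hne_v : ∀ x ∈ b i :: l, x ≠ v := by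
        intro x hx
        rcases (hreach x hx).1.cases_tail with he | ⟨y, -, hT⟩
        · rw [he]; exact hv
        · exact hT.2
      have hne_u : ∀ x ∈ b i :: l, x ≠ u := by
        intro x hx
        rcases (hreach x hx).2.cases_head with rfl | ⟨y, hT, -⟩
        · exact hcv.1
        · exact hT.1.1
      have hchA : List.Chain A u ((b i :: l) ++ [v]) := by
        rw [List.cons_append]
        refine List.chain_cons.mpr ⟨?_, ?_⟩
        · rcases hab i with h | h
          · rwa [hai] at h
          · rw [hai] at h
            exact absurd h.symm (hne_u (b i) List.mem_cons_self)
        · exact chain_append_last (r := T) (s := A) (fun x y hxy => hSA hxy.1) (hSA hcv) l hch hlast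
      have hum : u ∉ b i :: l := fun hm => hne_u u hm rfl
      have hnodup : (u :: ((b i :: l) ++ [v])).Nodup := by
        rw [List.nodup_cons]
        constructor
        · intro hm
          rcases List.mem_append.mp hm with h | h
          · exact hum h
          · exact huv (by simpa using h)
        · rw [List.nodup_append]
          refine ⟨hnd, by simp, ?_⟩
          intro x hx hx' hx''
          rw [List.mem_singleton] at hx''
          rw [hx'']
          exact hne_v x hx
      have hends : (u :: ((b i :: l) ++ [v])).getLast (List.cons_ne_nil _ _) = v := by
        have hrw : u :: ((b i :: l) ++ [v]) = (u :: b i :: l) ++ [v] := by simp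
        rw [List.getLast_congr _ (by simp) hrw, List.getLast_append_right (List.cons_ne_nil v [])]
        rfl
      refine ⟨⟨(b i :: l) ++ [v], hchA, hends, hnodup⟩, fun h => absurd h hv,
        fun _ => rfl, ?_, fun h => absurd h hv⟩
      intro x hx
      obtain ⟨hm, hxu, hxv⟩ := hx
      have hxm : x ∈ b i :: l := by
        rcases List.mem_cons.mp hm with rfl | hm'
        · exact absurd rfl hxu
        rcases List.mem_append.mp hm' with h | h
        · exact h
        · exact absurd (List.mem_singleton.mp h) hxv
      exact (hreach x hxm).1
  choose DP hDP1 hDP2 hDP3 hDP4 using hDP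
  have hDPinj : ∀ i hi j hj, DP i hi = DP j hj → i = j := by
    intro i hi j hj h
    by_cases hbi : b i = v <;> by_cases hbj : b j = v
    · have h1 := hlen i ⟨((hMmem i).mp hi).1, hbi⟩
      have h2 := hlen j ⟨((hMmem j).mp hj).1, hbj⟩
      exact hQinj (Subtype.ext (eq_of_length_one h1 h2))
    · exfalso
      have e1 := hDP1 i hi hbi
      have e2 := hDP2 j hj hbj
      rw [h] at e1
      rw [e1] at e2
      simp at e2
      exact hbj e2.symm
    · exfalso
      have e1 := hDP1 j hj hbj
      have e2 := hDP2 i hi hbi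
      rw [← h] at e1
      rw [e1] at e2
      simp at e2
      exact hbi e2.symm
    · have e1 := hDP2 i hi hbi
      have e2 := hDP2 j hj hbj
      rw [h] at e1
      rw [e1] at e2
      simp at e2
      exact hB1 i j e2 hbi
  have hDPdis : ∀ i hi j hj, i ≠ j → (DP i hi).interior ∩ (DP j hj).interior = ∅ := by
    intro i hi j hj hij
    rw [Set.eq_empty_iff_forall_notMem]
    rintro x ⟨h1, h2⟩
    by_cases hbi : b i = v
    · rw [hDP4 i hi hbi] at h1; exact h1
    by_cases hbj : b j = v
    · rw [hDP4 j hj hbj] at h2; exact h2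
    have r1 := hDP3 i hi x h1
    have r2 := hDP3 j hj x h2
    have hbb : b i ≠ b j := fun h => hij (hB1 i j h hbi)
    refine hbb (orbits_eq (r := T) (fun h h' => hTinj h h') ?_ ?_ r1 r2)
    · exact fun y hy => hnopre (b i) ⟨i, ((hMmem i).mp hi).1, rfl⟩ hbi y hy.1
    · exact fun y hy => hnopre (b j) ⟨j, ((hMmem j).mp hj).1, rfl⟩ hbj y hy.1
  have hMcard : M.card ≤ diKappa A u v := by
    have e : {x // x ∈ M} ≃ Fin M.card := Fintype.equivFinOfCardEq (Fintype.card_coe M)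
    refine le_csSup (diKappa_bddAbove huv) ⟨fun n => DP (e.symm n).1 (e.symm n).2, ?_, ?_⟩
    · intro n m h
      have h2 : e.symm n = e.symm m := Subtype.ext (hDPinj _ _ _ _ h)
      simpa using congrArg e h2
    · intro n m hnm
      refine hDPdis _ _ _ _ (fun he => hnm ?_)
      have h2 : e.symm n = e.symm m := Subtype.ext he
      simpa using congrArg e h2
  omega

end PartB

section Bounds
variable {V : Type*} [Fintype V]

lemma localKappa_bddAbove (G : SimpleGraph V) {x y : V} (hxy : x ≠ y) :
    BddAbove {m | ∃ P : Fin m → G.Path x y, Function.Injective P ∧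
      ∀ i j, i ≠ j → (P i : G.Walk x y).interior ∩ (P j : G.Walk x y).interior = ∅} := by
  refine ⟨Fintype.card V, fun k hk => ?_⟩
  obtain ⟨P, hinj, hdis⟩ := hk
  have hne : ∀ i : Fin k, ((P i : G.Walk x y).support.tail) ≠ [] := by
    intro i h
    have hsup := (P i : G.Walk x y).support_eq_cons
    rw [h] at hsup
    have hgl := (P i : G.Walk x y).getLast_support
    rw [List.getLast_congr _ (by simp [hsup]) hsup] at hgl
    exact hxy (by simpa using hgl)
  set e : Fin k → V := fun i => ((P i : G.Walk x y).support.tail).head (hne i) with hedef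
  have hmem : ∀ i, e i ∈ (P i : G.Walk x y).support :=
    fun i => List.mem_of_mem_tail (List.head_mem _)
  have hnex : ∀ i, e i ≠ x := by
    intro i h
    have hnd := (P i).2.support_nodup
    rw [(P i : G.Walk x y).support_eq_cons, List.nodup_cons] at hnd
    have hh : e i ∈ (P i : G.Walk x y).support.tail := List.head_mem (hne i)
    rw [h] at hh
    exact hnd.1 hh
  have hlen1 : ∀ t : Fin k, e t = y → (P t : G.Walk x y).length = 1 := by
    intro t het
    have hnd := (P t).2.support_nodup
    have hsup := (P t : G.Walk x y).support_eq_cons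
    have hnd' : (x :: (P t : G.Walk x y).support.tail).Nodup := by rw [← hsup]; exact hnd
    have hgl := (P t : G.Walk x y).getLast_support
    rw [List.getLast_congr _ (by simp) hsup] at hgl
    have htail : (P t : G.Walk x y).support.tail = [y] :=
      list_single hnd' (hne t) hgl het
    have hslen : (P t : G.Walk x y).support.length = 2 := by rw [hsup, htail]; rfl
    have hl := (P t : G.Walk x y).length_support
    omega
  have hei : Function.Injective e := by
    intro i j hij
    by_cases hey : e i = y
    · exact hinj (Subtype.ext (eq_of_length_one (hlen1 i hey) (hlen1 j (hij ▸ hey))))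
    · by_contra hijne
      have m1 : e i ∈ (P i : G.Walk x y).interior := ⟨hmem i, hnex i, hey⟩
      have m2 : e j ∈ (P j : G.Walk x y).interior :=
        ⟨hmem j, hnex j, fun h => hey (hij.trans h)⟩
      rw [← hij] at m2
      have h := hdis i j hijne
      rw [Set.eq_empty_iff_forall_notMem] at h
      exact h _ ⟨m1, m2⟩
  simpa using Fintype.card_le_of_injective e hei

end Bounds

section LE
variable {R : Type*} [Fintype R] {A : R → R → Prop} {u v : R}

lemma kappa_le (huv : u ≠ v) :
    localKappa (shiftGraph A) (Sum.inl u) (Sum.inr v) ≤ diKappa A u v + Fintype.card R := by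
  have hne : (Sum.inl u : R ⊕ R) ≠ Sum.inr v := by simp
  have h0 : localKappa (shiftGraph A) (Sum.inl u) (Sum.inr v) ∈
      {m | ∃ P : Fin m → (shiftGraph A).Path (Sum.inl u) (Sum.inr v), Function.Injective P ∧
        ∀ i j, i ≠ j → (P i : (shiftGraph A).Walk (Sum.inl u) (Sum.inr v)).interior ∩
          (P j : (shiftGraph A).Walk (Sum.inl u) (Sum.inr v)).interior = ∅} := by
    apply Nat.sSup_mem
    · exact ⟨0, fun i => i.elim0, fun i => i.elim0, fun i => i.elim0⟩
    · exact localKappa_bddAbove (shiftGraph A) hne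
  obtain ⟨P, h1, h2⟩ := h0
  exact localKappa_mem_le huv P h1 h2

end LE

section SplitLemmas
variable {α : Type*} {r : α → α → Prop}

lemma mem_cons_split {w : α} {l : List α} (hw : w ∈ l) :
    ∀ a : α, ∃ p l1 l2, a :: l = l1 ++ p :: w :: l2 := by
  induction l with
  | nil => exact absurd hw List.not_mem_nil
  | cons x t ih =>
    intro a
    rcases List.mem_cons.mp hw with rfl | hw'
    · exact ⟨a, [], t, rfl⟩
    · obtain ⟨p, l1, l2, hp⟩ := ih hw' x
      exact ⟨p, a :: l1, l2, by rw [List.cons_append, ← hp]⟩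

lemma no_split_head {w : α} {l2 : List α} (hnd : (w :: l2).Nodup) :
    ∀ (t : List α) (p' : α) (l2' : List α), t ++ p' :: w :: l2' = w :: l2 → False := by
  intro t p' l2' h
  have hwl2 : w ∉ l2 := (List.nodup_cons.mp hnd).1
  cases t with
  | nil =>
    have h1 := List.cons.injEq .. ▸ h
    rw [List.nil_append] at h
    injection h with h1 h2
    exact hwl2 (h2 ▸ (List.mem_cons_self : w ∈ w :: l2'))
  | cons s t' =>
    rw [List.cons_append] at h
    injection h with h1 h2
    refine hwl2 ?_
    rw [← h2]
    simp

lemma split_pred_unique : ∀ (l1 : List α) {p w l2 l1' p' l2' : _},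
    (l1 ++ p :: w :: l2).Nodup → l1 ++ p :: w :: l2 = l1' ++ p' :: w :: l2' → p = p' := by
  intro l1
  induction l1 with
  | nil =>
    intro p w l2 l1' p' l2' hnd h
    cases l1' with
    | nil =>
      rw [List.nil_append, List.nil_append] at h
      injection h with h1 h2
    | cons q t' =>
      rw [List.nil_append, List.cons_append] at h
      injection h with h1 h2
      exfalso
      have hnd' : (w :: l2).Nodup := by
        rw [List.nil_append] at hnd
        exact (List.nodup_cons.mp hnd).2
      exact no_split_head hnd' t' p' l2' h2.symm
  | cons q t ih =>
    intro p w l2 l1' p' l2' hnd h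
    cases l1' with
    | nil =>
      rw [List.nil_append, List.cons_append] at h
      injection h with h1 h2
      exfalso
      have hnd2 : (w :: l2').Nodup := h2 ▸ hnd.of_cons
      exact no_split_head hnd2 t p l2 h2
    | cons q' t' =>
      rw [List.cons_append, List.cons_append] at h
      injection h with h1 h2
      exact ih (by rw [List.cons_append] at hnd; exact hnd.of_cons) h2

lemma split_succ_unique {L : List α} (hnd : L.Nodup) {l1 p w l2 l1' w' l2' : _}
    (h1 : L = l1 ++ p :: w :: l2) (h2 : L = l1' ++ p :: w' :: l2') : w = w' := by
  have hr1 : L.reverse = l2.reverse ++ w :: p :: l1.reverse := by rw [h1]; simp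
  have hr2 : L.reverse = l2'.reverse ++ w' :: p :: l1'.reverse := by rw [h2]; simp
  have := split_pred_unique l2.reverse (by rw [← hr1]; exact List.nodup_reverse.mpr hnd) (hr1.symm.trans hr2)
  exact this

lemma chain_of_split : ∀ (l : List α) (a : α), List.Chain r a l →
    ∀ (l1 : List α) (p w : α) (l2 : List α), a :: l = l1 ++ p :: w :: l2 → r p w := by
  intro l
  induction l with
  | nil =>
    intro a _ l1 p w l2 h
    have := congrArg List.length h
    simp at this
    omega
  | cons s t ih =>
    intro a hch l1 p w l2 h
    rcases List.chain_cons.mp hch with ⟨has, hst⟩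
    cases l1 with
    | nil =>
      rw [List.nil_append] at h
      injection h with h1 h2
      injection h2 with h3 h4
      rw [← h1, ← h3]
      exact has
    | cons q t1 =>
      rw [List.cons_append] at h
      injection h with h1 h2
      exact ih s hst t1 p w l2 h2

lemma split_ne_last {L : List α} (hnd : L.Nodup) {l1 p w l2 : _}
    (h : L = l1 ++ p :: w :: l2) (hL : L ≠ []) : p ≠ L.getLast hL := by
  have hmem : L.getLast hL ∈ w :: l2 := by
    have hrw : L = (l1 ++ [p]) ++ (w :: l2) := by rw [h]; simp
    rw [List.getLast_congr _ (by simp) hrw, List.getLast_append_right (List.cons_ne_nil w l2)]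
    exact List.getLast_mem _
  have hp : p ∉ w :: l2 := by
    rw [h] at hnd
    have := (List.nodup_append.mp hnd).2.1
    exact (List.nodup_cons.mp this).1
  intro hpe
  rw [hpe] at hp
  exact hp hmem

lemma head_split {u w : α} {l l1 l2 : List α} (hnd : (u :: l).Nodup)
    (h : u :: l = l1 ++ u :: w :: l2) : l = w :: l2 := by
  cases l1 with
  | nil =>
    rw [List.nil_append] at h
    injection h
  | cons q t =>
    rw [List.cons_append] at h
    injection h with h1 h2
    exfalso
    have : u ∈ l := by rw [h2]; simp
    exact (List.nodup_cons.mp hnd).1 this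

end SplitLemmas

section WalkHelpers
variable {V : Type*} {G : SimpleGraph V} {a b c d : V}

lemma isPath1 (h : G.Adj a b) : (Walk.cons h Walk.nil : G.Walk a b).IsPath := by
  rw [Walk.isPath_def]
  simp [Walk.support_cons, h.ne]

lemma interior1 (h : G.Adj a b) : (Walk.cons h Walk.nil : G.Walk a b).interior = ∅ := by
  ext y
  simp only [Walk.interior, Walk.support_cons, Walk.support_nil, List.mem_cons,
    List.mem_singleton, Set.mem_setOf_eq, Set.mem_empty_iff_false, iff_false, not_and]
  rintro (rfl | rfl | h') hy hy' <;> simp_all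

lemma isPath2 (h1 : G.Adj a b) (h2 : G.Adj b c) (hac : a ≠ c) :
    (Walk.cons h1 (Walk.cons h2 Walk.nil) : G.Walk a c).IsPath := by
  rw [Walk.isPath_def]
  simp [Walk.support_cons, h1.ne, h2.ne, hac]

lemma interior2 (h1 : G.Adj a b) (h2 : G.Adj b c) :
    (Walk.cons h1 (Walk.cons h2 Walk.nil) : G.Walk a c).interior = {b} := by
  ext y
  simp only [Walk.interior, Walk.support_cons, Walk.support_nil, List.mem_cons,
    List.mem_singleton, Set.mem_setOf_eq, Set.mem_singleton_iff]
  constructor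
  · rintro ⟨rfl | rfl | rfl | h', hy, hy'⟩ <;> simp_all
  · rintro rfl
    exact ⟨by simp, h1.ne', h2.ne⟩

lemma isPath3 (h1 : G.Adj a b) (h2 : G.Adj b c) (h3 : G.Adj c d)
    (hac : a ≠ c) (hbd : b ≠ d) (had : a ≠ d) :
    (Walk.cons h1 (Walk.cons h2 (Walk.cons h3 Walk.nil)) : G.Walk a d).IsPath := by
  rw [Walk.isPath_def]
  simp [Walk.support_cons, h1.ne, h2.ne, h3.ne, hac, hbd, had]

lemma interior3 (h1 : G.Adj a b) (h2 : G.Adj b c) (h3 : G.Adj c d)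
    (hba : b ≠ a) (hbd : b ≠ d) (hca : c ≠ a) (hcd : c ≠ d) :
    (Walk.cons h1 (Walk.cons h2 (Walk.cons h3 Walk.nil)) : G.Walk a d).interior = {b, c} := by
  ext y
  simp only [Walk.interior, Walk.support_cons, Walk.support_nil, List.mem_cons,
    List.mem_singleton, Set.mem_setOf_eq, Set.mem_insert_iff, Set.mem_singleton_iff]
  constructor
  · rintro ⟨rfl | rfl | rfl | rfl | h', hy, hy'⟩ <;> simp_all
  · rintro (rfl | rfl)
    · exact ⟨by simp, hba, hbd⟩
    · exact ⟨by simp, hca, hcd⟩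

end WalkHelpers

open Classical in
noncomputable def rSet {R : Type*} (v : R) {k : ℕ} : R ⊕ Fin k → Set (R ⊕ R)
  | .inl w => if w = v then ∅ else {Sum.inr w}
  | .inr _ => ∅

def lSet {R : Type*} : Option R → Set (R ⊕ R)
  | none => ∅
  | some q => {Sum.inl q}

open Classical in
@[simp] lemma rSet_inl {R : Type*} (v : R) {k : ℕ} (w : R) :
    rSet v (k := k) (Sum.inl w) = if w = v then ∅ else {Sum.inr w} := rfl
@[simp] lemma rSet_inr {R : Type*} (v : R) {k : ℕ} (i : Fin k) :
    rSet v (Sum.inr i) = ∅ := rfl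
@[simp] lemma lSet_none {R : Type*} : lSet (R := R) none = ∅ := rfl
@[simp] lemma lSet_some {R : Type*} (q : R) : lSet (some q) = {Sum.inl q} := rfl

section PartA
variable {R : Type*} [Fintype R] {A : R → R → Prop} {u v : R}

lemma kappa_ge (huv : u ≠ v) :
    diKappa A u v + Fintype.card R ≤ localKappa (shiftGraph A) (Sum.inl u) (Sum.inr v) := by
  classical
  have h0 : diKappa A u v ∈ {m | ∃ P : Fin m → DiPath A u v, Function.Injective P ∧
      ∀ i j, i ≠ j → (P i).interior ∩ (P j).interior = ∅} :=
    Nat.sSup_mem ⟨0, fun i => i.elim0, fun i => i.elim0, fun i => i.elim0⟩ (diKappa_bddAbove huv)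
  obtain ⟨P, hPinj, hPdis⟩ := h0
  set Succ : Fin (diKappa A u v) → R → R → Prop :=
    fun i p w => ∃ l1 l2, u :: (P i).verts = l1 ++ p :: w :: l2 with hSuccdef
  have hSuccA : ∀ {i p w}, Succ i p w → A p w := by
    rintro i p w ⟨l1, l2, h⟩
    exact chain_of_split (P i).verts u (P i).chain l1 p w l2 h
  have hSucc_ne_v : ∀ {i p w}, Succ i p w → p ≠ v := by
    rintro i p w ⟨l1, l2, h⟩
    have := split_ne_last (P i).nodup h (List.cons_ne_nil _ _)
    rwa [(P i).ends] at this
  have hSucc_uniq : ∀ {i p w w'}, Succ i p w → Succ i p w' → w = w' := by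
    rintro i p w w' ⟨l1, l2, h1⟩ ⟨l1', l2', h2⟩
    exact split_succ_unique (P i).nodup h1 h2
  have hSucc_memp : ∀ {i p w}, Succ i p w → p ∈ u :: (P i).verts := by
    rintro i p w ⟨l1, l2, h⟩
    rw [h]; simp
  have hdisjel : ∀ {i j : Fin (diKappa A u v)} (x : R), i ≠ j → x ∈ (P i).interior →
      x ∈ (P j).interior → False := by
    intro i j x hij h1 h2
    have h := hPdis i j hij
    rw [Set.eq_empty_iff_forall_notMem] at h
    exact h x ⟨h1, h2⟩
  have hsplit : ∀ (i : Fin (diKappa A u v)) (w : R), w ∈ (P i).verts → ∃ p, Succ i p w := by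
    intro i w hw
    obtain ⟨p, l1, l2, h⟩ := mem_cons_split hw u
    exact ⟨p, l1, l2, h⟩
  have hvmem : ∀ i : Fin (diKappa A u v), v ∈ (P i).verts := by
    intro i
    have := (P i).ends ▸ List.getLast_mem (List.cons_ne_nil u (P i).verts)
    rcases List.mem_cons.mp this with h | h
    · exact absurd h.symm huv
    · exact h
  have hF : ∀ t : R ⊕ Fin (diKappa A u v),
      ∃ (pa : (shiftGraph A).Path (Sum.inl u) (Sum.inr v)) (s : Option R),
      (pa : (shiftGraph A).Walk (Sum.inl u) (Sum.inr v)).interior = rSet v t ∪ lSet s ∧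
      (∀ q, s = some q →
        ((q = v ∧ t = Sum.inl v) ∨
        (∃ i : Fin (diKappa A u v), q ∈ (P i).interior ∧
          ((∃ w, t = Sum.inl w ∧ w ∈ (P i).interior ∧ Succ i q w) ∨
            (t = Sum.inr i ∧ Succ i q v))) ∨
        (∃ w, t = Sum.inl w ∧ q = w ∧ w ≠ u ∧ w ≠ v ∧ ∀ j, w ∉ (P j).interior))) ∧
      (rSet v t ∪ lSet s = ∅ → ∃ i, t = Sum.inr i ∧ (P i).verts = [v]) := by
    rintro (w | i)
    · by_cases hwu : w = u
      · subst hwu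
        have h1 : (shiftGraph A).Adj (Sum.inl w) (Sum.inr w) := Or.inr rfl
        have h2 : (shiftGraph A).Adj (Sum.inr w) (Sum.inr v) := huv
        refine ⟨⟨Walk.cons h1 (Walk.cons h2 Walk.nil), isPath2 h1 h2 (by simp)⟩, none,
          ?_, by simp, ?_⟩
        · rw [interior2 h1 h2]
          simp [if_neg huv]
        · intro hemp
          exfalso
          rw [Set.eq_empty_iff_forall_notMem] at hemp
          exact hemp (Sum.inr w) (by simp [if_neg huv])
      · by_cases hwv : w = v
        · subst hwv
          have h1 : (shiftGraph A).Adj (Sum.inl u) (Sum.inl w) := huv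
          have h2 : (shiftGraph A).Adj (Sum.inl w) (Sum.inr w) := Or.inr rfl
          refine ⟨⟨Walk.cons h1 (Walk.cons h2 Walk.nil), isPath2 h1 h2 (by simp)⟩, some w,
            ?_, ?_, ?_⟩
          · rw [interior2 h1 h2]
            simp
          · rintro q hq
            injection hq with hq
            subst hq
            exact Or.inl ⟨rfl, rfl⟩
          · intro hemp
            exfalso
            rw [Set.eq_empty_iff_forall_notMem] at hemp
            exact hemp (Sum.inl w) (by simp)
        · by_cases hex : ∃ i : Fin (diKappa A u v), w ∈ (P i).interior
          · obtain ⟨i, hwi⟩ := hex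
            have hwverts : w ∈ (P i).verts := by
              rcases List.mem_cons.mp hwi.1 with h | h
              · exact absurd h hwu
              · exact h
            obtain ⟨p, hp⟩ := hsplit i w hwverts
            have hApw : A p w := hSuccA hp
            have hpnv : p ≠ v := hSucc_ne_v hp
            by_cases hpu : p = u
            · subst hpu
              have h1 : (shiftGraph A).Adj (Sum.inl p) (Sum.inr w) := Or.inl hApw
              have h2 : (shiftGraph A).Adj (Sum.inr w) (Sum.inr v) := hwv
              refine ⟨⟨Walk.cons h1 (Walk.cons h2 Walk.nil), isPath2 h1 h2 (by simp)⟩, none,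
                ?_, by simp, ?_⟩
              · rw [interior2 h1 h2]
                simp [if_neg hwv]
              · intro hemp
                exfalso
                rw [Set.eq_empty_iff_forall_notMem] at hemp
                exact hemp (Sum.inr w) (by simp [if_neg hwv])
            · have hpint : p ∈ (P i).interior := ⟨hSucc_memp hp, hpu, hpnv⟩
              have h1 : (shiftGraph A).Adj (Sum.inl u) (Sum.inl p) := fun h => hpu h.symm
              have h2 : (shiftGraph A).Adj (Sum.inl p) (Sum.inr w) := Or.inl hApw
              have h3 : (shiftGraph A).Adj (Sum.inr w) (Sum.inr v) := hwv
              refine ⟨⟨Walk.cons h1 (Walk.cons h2 (Walk.cons h3 Walk.nil)),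
                isPath3 h1 h2 h3 (by simp) (by simp) (by simp)⟩, some p, ?_, ?_, ?_⟩
              · rw [interior3 h1 h2 h3 (by simpa using hpu) (by simp) (by simp) (by simpa using hwv)]
                rw [rSet_inl, lSet_some, if_neg hwv]
                ext y
                constructor
                · rintro (rfl | rfl)
                  · exact Or.inr rfl
                  · exact Or.inl rfl
                · rintro (rfl | rfl)
                  · exact Or.inr rfl
                  · exact Or.inl rfl
              · rintro q hq
                injection hq with hq
                subst hq
                exact Or.inr (Or.inl ⟨i, hpint, Or.inl ⟨w, rfl, hwi, hp⟩⟩)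
              · intro hemp
                exfalso
                rw [Set.eq_empty_iff_forall_notMem] at hemp
                exact hemp (Sum.inl p) (by simp)
          · have h1 : (shiftGraph A).Adj (Sum.inl u) (Sum.inl w) := fun h => hwu h.symm
            have h2 : (shiftGraph A).Adj (Sum.inl w) (Sum.inr w) := Or.inr rfl
            have h3 : (shiftGraph A).Adj (Sum.inr w) (Sum.inr v) := hwv
            refine ⟨⟨Walk.cons h1 (Walk.cons h2 (Walk.cons h3 Walk.nil)),
              isPath3 h1 h2 h3 (by simp) (by simp) (by simp)⟩, some w, ?_, ?_, ?_⟩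
            · rw [interior3 h1 h2 h3 (by simpa using hwu) (by simp) (by simp) (by simpa using hwv)]
              rw [rSet_inl, lSet_some, if_neg hwv]
              ext y
              constructor
              · rintro (rfl | rfl)
                · exact Or.inr rfl
                · exact Or.inl rfl
              · rintro (rfl | rfl)
                · exact Or.inr rfl
                · exact Or.inl rfl
            · rintro q hq
              injection hq with hq
              subst hq
              exact Or.inr (Or.inr ⟨w, rfl, rfl, hwu, hwv, fun j hj => hex ⟨j, hj⟩⟩)
            · intro hemp
              exfalso
              rw [Set.eq_empty_iff_forall_notMem] at hemp
              exact hemp (Sum.inl w) (by simp)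
    · obtain ⟨p, hp⟩ := hsplit i v (hvmem i)
      have hApv : A p v := hSuccA hp
      by_cases hpu : p = u
      · have hverts : (P i).verts = [v] := by
          obtain ⟨l1, l2, h⟩ := hp
          rw [hpu] at h
          have hh := head_split (P i).nodup h
          have hrw : u :: (P i).verts = u :: v :: l2 := by rw [hh]
          have hnd2 := (P i).nodup
          rw [hrw] at hnd2
          have hends2 := (P i).ends
          rw [List.getLast_congr _ (by simp) hrw] at hends2
          rw [hh]
          exact list_single hnd2 (List.cons_ne_nil v l2) hends2 rfl
        have h1 : (shiftGraph A).Adj (Sum.inl u) (Sum.inr v) := Or.inl (hpu ▸ hApv)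
        refine ⟨⟨Walk.cons h1 Walk.nil, isPath1 h1⟩, none, ?_, by simp, ?_⟩
        · rw [interior1 h1]
          simp
        · intro _
          exact ⟨i, rfl, hverts⟩
      · have hpnv : p ≠ v := hSucc_ne_v hp
        have hpint : p ∈ (P i).interior := ⟨hSucc_memp hp, hpu, hpnv⟩
        have h1 : (shiftGraph A).Adj (Sum.inl u) (Sum.inl p) := fun h => hpu h.symm
        have h2 : (shiftGraph A).Adj (Sum.inl p) (Sum.inr v) := Or.inl hApv
        refine ⟨⟨Walk.cons h1 (Walk.cons h2 Walk.nil), isPath2 h1 h2 (by simp)⟩, some p,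
          ?_, ?_, ?_⟩
        · rw [interior2 h1 h2]
          simp
        · rintro q hq
          injection hq with hq
          subst hq
          exact Or.inr (Or.inl ⟨i, hpint, Or.inr ⟨rfl, hp⟩⟩)
        · intro hemp
          exfalso
          rw [Set.eq_empty_iff_forall_notMem] at hemp
          exact hemp (Sum.inl p) (by simp)
  choose F s hFint hFtag hFemp using hF
  have htagne : ∀ (t t' : R ⊕ Fin (diKappa A u v)) (q : R), t ≠ t' →
      s t = some q → s t' = some q → False := by
    intro t t' q hne hq hq'
    have T1 := hFtag t q hq
    have T2 := hFtag t' q hq'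
    rcases T1 with ⟨rfl, rfl⟩ | ⟨i, hqi, hin⟩ | ⟨w, rfl, rfl, hwu, hwv, hfree⟩
    · rcases T2 with ⟨-, rfl⟩ | ⟨j, hqj, -⟩ | ⟨w', rfl, rfl, -, hwv', -⟩
      · exact hne rfl
      · exact hqj.2.2 rfl
      · exact hwv' rfl
    · rcases T2 with ⟨rfl, rfl⟩ | ⟨j, hqj, hin'⟩ | ⟨w', rfl, rfl, -, -, hfree'⟩
      · exact hqi.2.2 rfl
      · have hij : i = j := by
          by_contra hij
          exact hdisjel q hij hqi hqj
        subst hij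
        rcases hin with ⟨w, rfl, hwint, hsw⟩ | ⟨rfl, hsv⟩
        · rcases hin' with ⟨w', rfl, hwint', hsw'⟩ | ⟨rfl, hsv'⟩
          · exact hne (by rw [hSucc_uniq hsw hsw'])
          · exact hwint.2.2 (hSucc_uniq hsw hsv')
        · rcases hin' with ⟨w', rfl, hwint', hsw'⟩ | ⟨rfl, hsv'⟩
          · exact hwint'.2.2 (hSucc_uniq hsw' hsv)
          · exact hne rfl
      · exact hfree' i hqi
    · rcases T2 with ⟨rfl, rfl⟩ | ⟨j, hqj, -⟩ | ⟨w', rfl, rfl, -, -, -⟩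
      · exact hwv rfl
      · exact hfree j hqj
      · exact hne rfl
  have hrmem : ∀ (t : R ⊕ Fin (diKappa A u v)) (x : R ⊕ R), x ∈ rSet v t →
      ∃ w, t = Sum.inl w ∧ x = Sum.inr w ∧ w ≠ v := by
    rintro (w | i) x hx
    · rw [rSet_inl] at hx
      by_cases hwv : w = v
      · rw [if_pos hwv] at hx
        exact absurd hx (Set.notMem_empty x)
      · rw [if_neg hwv] at hx
        exact ⟨w, rfl, hx, hwv⟩
    · exact absurd hx (Set.notMem_empty x)
  have hFdis : ∀ t t', t ≠ t' →
      ((F t : (shiftGraph A).Walk (Sum.inl u) (Sum.inr v)).interior ∩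
        (F t' : (shiftGraph A).Walk (Sum.inl u) (Sum.inr v)).interior) = ∅ := by
    intro t t' hne
    rw [hFint t, hFint t', Set.eq_empty_iff_forall_notMem]
    rintro x ⟨hx1, hx2⟩
    rcases Set.mem_union _ _ _ |>.mp hx1 with h1 | h1 <;>
      rcases Set.mem_union _ _ _ |>.mp hx2 with h2 | h2
    · obtain ⟨w, rfl, rfl, hwv⟩ := hrmem t x h1
      obtain ⟨w', he, he2, -⟩ := hrmem t' _ h2
      injection he2 with he2
      exact hne (by rw [he, ← he2])
    · obtain ⟨w, rfl, rfl, -⟩ := hrmem t x h1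
      rcases hs : s t' with - | q
      · rw [hs] at h2; exact h2
      · rw [hs, lSet_some] at h2
        simp at h2
    · obtain ⟨w, he, rfl, -⟩ := hrmem t' x h2
      rcases hs : s t with - | q
      · rw [hs] at h1; exact h1
      · rw [hs, lSet_some] at h1
        simp at h1
    · rcases hs : s t with - | q
      · rw [hs] at h1; exact h1
      rcases hs' : s t' with - | q'
      · rw [hs'] at h2; exact h2
      rw [hs, lSet_some] at h1
      rw [hs', lSet_some] at h2
      rw [Set.mem_singleton_iff] at h1 h2
      rw [h1] at h2
      injection h2 with h2
      exact htagne t t' q hne hs (by rw [hs', h2])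
  have hFinj : Function.Injective F := by
    intro t t' h
    by_contra hne
    have hie : (F t : (shiftGraph A).Walk (Sum.inl u) (Sum.inr v)).interior =
        (F t' : (shiftGraph A).Walk (Sum.inl u) (Sum.inr v)).interior := by rw [h]
    have hdis := hFdis t t' hne
    rw [hie, Set.inter_self] at hdis
    have he1 : rSet v t ∪ lSet (s t) = ∅ := by rw [← hFint t, hie, hdis]
    have he2 : rSet v t' ∪ lSet (s t') = ∅ := by rw [← hFint t', hdis]
    obtain ⟨i, rfl, hvi⟩ := hFemp t he1
    obtain ⟨j, rfl, hvj⟩ := hFemp t' he2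
    have : P i = P j := DiPath.eq_of_verts_eq (hvi.trans hvj.symm)
    exact hne (by rw [hPinj this])
  have hcard : Fintype.card (R ⊕ Fin (diKappa A u v)) = diKappa A u v + Fintype.card R := by
    simp [add_comm]
  have e : Fin (diKappa A u v + Fintype.card R) ≃ R ⊕ Fin (diKappa A u v) :=
    (Fintype.equivFinOfCardEq hcard).symm
  refine le_csSup (localKappa_bddAbove (shiftGraph A) (by simp))
    ⟨fun n => F (e n), hFinj.comp e.injective, fun i j hij => hFdis _ _ ?_⟩
  exact fun hh => hij (e.injective hh)

end PartA

/-- in the connectivity-shift graph, `κ_G(u, v') = κ_D(u, v) + |R|`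
for distinct `u, v ∈ R`. -/
theorem stmt1 {R : Type*} [Fintype R] (A : R → R → Prop) (u v : R) (huv : u ≠ v) :
    localKappa (shiftGraph A) (Sum.inl u) (Sum.inr v) = diKappa A u v + Fintype.card R :=
  le_antisymm (kappa_le huv) (kappa_ge huv)
end

section
/- Let D = (R, A) be a digraph, G its connectivity-shift graph, and u, v ∈ R distinct. Then there are more than |R| internally disjoint paths between u and v' in G if and only if there is at least one directed path from u to v in D (other than possibly using the arc set; i.e., v is reachable from u in D by a nontrivial directed path or uv ∈ A). In particular, for D a DAG, the |R|-connectivity query 'κ_G(u, v') > |R|?' is equivalent to the reachability query 'is v reachable from u in D?'. -/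
open SimpleGraph

section PathHelpers

variable {V : Type*} {G : SimpleGraph V}

lemma walk2_isPath {s t : V} (h : G.Adj s t) : (Walk.cons h Walk.nil).IsPath := by
  simp [Walk.isPath_def, h.ne]

lemma walk2_interior {s t : V} (h : G.Adj s t) :
    (Walk.cons h Walk.nil).interior = (∅ : Set V) := by
  ext z
  simp only [Walk.interior, Set.mem_setOf_eq, Set.mem_empty_iff_false, iff_false]
  rintro ⟨hz, hs, ht⟩
  simp only [Walk.support_cons, Walk.support_nil, List.mem_cons, List.mem_singleton,
    List.not_mem_nil, or_false] at hz
  tauto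

lemma walk3_isPath {s x t : V} (h1 : G.Adj s x) (h2 : G.Adj x t) (hst : s ≠ t) :
    (Walk.cons h1 (Walk.cons h2 Walk.nil)).IsPath := by
  simp [Walk.isPath_def, h1.ne, h2.ne, hst]

lemma walk3_interior {s x t : V} (h1 : G.Adj s x) (h2 : G.Adj x t) :
    (Walk.cons h1 (Walk.cons h2 Walk.nil)).interior = {x} := by
  ext z
  simp only [Walk.interior, Set.mem_setOf_eq, Set.mem_singleton_iff]
  constructor
  · rintro ⟨hz, hs, ht⟩
    simp only [Walk.support_cons, Walk.support_nil, List.mem_cons, List.mem_singleton,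
      List.not_mem_nil, or_false] at hz
    tauto
  · rintro rfl
    exact ⟨by simp, h1.ne', h2.ne⟩

lemma walk4_isPath {s x y t : V} (h1 : G.Adj s x) (h2 : G.Adj x y) (h3 : G.Adj y t)
    (hst : s ≠ t) (hsy : s ≠ y) (hxt : x ≠ t) :
    (Walk.cons h1 (Walk.cons h2 (Walk.cons h3 Walk.nil))).IsPath := by
  simp [Walk.isPath_def, h1.ne, h2.ne, h3.ne, hst, hsy, hxt]

lemma walk4_interior {s x y t : V} (h1 : G.Adj s x) (h2 : G.Adj x y) (h3 : G.Adj y t)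
    (hsy : s ≠ y) (hxt : x ≠ t) :
    (Walk.cons h1 (Walk.cons h2 (Walk.cons h3 Walk.nil))).interior = {x, y} := by
  ext z
  simp only [Walk.interior, Set.mem_setOf_eq, Set.mem_insert_iff, Set.mem_singleton_iff]
  constructor
  · rintro ⟨hz, hs, ht⟩
    simp only [Walk.support_cons, Walk.support_nil, List.mem_cons, List.mem_singleton,
      List.not_mem_nil, or_false] at hz
    tauto
  · rintro (rfl | rfl)
    · exact ⟨by simp, h1.ne', hxt⟩
    · exact ⟨by simp, hsy.symm, h3.ne⟩

end PathHelpers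

section Chains

variable {R : Type*} {A : R → R → Prop} {u v : R}

lemma exists_chain_fn (h : Relation.TransGen A u v) :
    ∃ (k : ℕ) (f : ℕ → R), 0 < k ∧ f 0 = u ∧ f k = v ∧ ∀ i < k, A (f i) (f (i + 1)) := by
  induction h with
  | single hab =>
    rename_i b
    refine ⟨1, fun i => if i = 0 then u else b, one_pos, by simp, by simp, ?_⟩
    intro i hi
    interval_cases i
    simpa using hab
  | tail _ hbc ih =>
    rename_i b c _
    obtain ⟨k, f, hk, hf0, hfk, hch⟩ := ih
    refine ⟨k + 1, fun i => if i ≤ k then f i else c, k.succ_pos, by simpa using hf0, by simp, ?_⟩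
    intro i hi
    rcases lt_or_eq_of_le (Nat.lt_succ_iff.mp hi) with hik | rfl
    · simpa [Nat.le_of_lt hik, Nat.succ_le_of_lt hik] using hch i hik
    · simpa [hfk] using hbc

lemma exists_inj_chain_fn (huv : u ≠ v) (h : Relation.TransGen A u v) :
    ∃ (k : ℕ) (f : ℕ → R), 0 < k ∧ f 0 = u ∧ f k = v ∧ (∀ i < k, A (f i) (f (i + 1))) ∧
      ∀ i j, i ≤ k → j ≤ k → f i = f j → i = j := by
  classical
  set S : Set ℕ :=
    {k | 0 < k ∧ ∃ f : ℕ → R, f 0 = u ∧ f k = v ∧ ∀ i < k, A (f i) (f (i + 1))} with hS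
  have hSne : S.Nonempty := by
    obtain ⟨k, f, hk, hf0, hfk, hch⟩ := exists_chain_fn h
    exact ⟨k, hk, f, hf0, hfk, hch⟩
  obtain ⟨hk, f, hf0, hfk, hch⟩ := Nat.sInf_mem hSne
  refine ⟨sInf S, f, hk, hf0, hfk, hch, ?_⟩
  have key : ∀ i j, i < j → j ≤ sInf S → f i = f j → False := by
    intro i j hij hjk hfij
    have hd0 : 0 < j - i := by omega
    have hk'0 : 0 < sInf S - (j - i) := by
      rcases Nat.eq_zero_or_pos (sInf S - (j - i)) with h0 | hpos
      · exfalso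
        have hi0 : i = 0 := by omega
        have hjj : j = sInf S := by omega
        apply huv
        rw [hi0, hjj] at hfij
        rw [← hf0, ← hfk]
        exact hfij
      · exact hpos
    set g : ℕ → R := fun m => if m < i then f m else f (m + (j - i)) with hg
    have hgge : ∀ m, i ≤ m → g m = f (m + (j - i)) := by
      intro m hm
      simp [hg, Nat.not_lt.mpr hm]
    have hgle : ∀ m, m ≤ i → g m = f m := by
      intro m hm
      by_cases hlt : m < i
      · simp [hg, hlt]
      · have hmi : m = i := by omega
        have h2 : m + (j - i) = j := by omega
        rw [hgge m (by omega), h2, ← hfij, hmi]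
    have hk'S : sInf S - (j - i) ∈ S := by
      refine ⟨hk'0, g, ?_, ?_, ?_⟩
      · rw [hgle 0 (Nat.zero_le i), hf0]
      · rw [hgge (sInf S - (j - i)) (by omega)]
        have h2 : sInf S - (j - i) + (j - i) = sInf S := by omega
        rw [h2, hfk]
      · intro m hm
        rcases Nat.lt_or_ge m i with hmi | hmi
        · rw [hgle m (by omega), hgle (m + 1) (by omega)]
          exact hch m (by omega)
        · rw [hgge m hmi, hgge (m + 1) (by omega)]
          have h2 : m + 1 + (j - i) = m + (j - i) + 1 := by omega
          rw [h2]
          exact hch (m + (j - i)) (by omega)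
    have hle : sInf S ≤ sInf S - (j - i) := Nat.sInf_le hk'S
    omega
  intro i j hik hjk hfij
  rcases Nat.lt_trichotomy i j with hij | rfl | hij
  · exact absurd hfij fun h' => key i j hij hjk h'
  · rfl
  · exact absurd hfij.symm fun h' => key j i hij hik h'

end Chains

section Escape

variable {R : Type*} {A : R → R → Prop}

lemma shift_escape (q : R → Prop) (hq : ∀ a b, q a → (A a b ∨ a = b) → q b)
    {x y : R ⊕ R} (p : (shiftGraph A).Walk x y) :
    ∀ w v, y = Sum.inr v → x = Sum.inl w → q w →
      ∃ z ∈ p.support, (∃ w', z = Sum.inl w' ∧ ¬ q w') ∨ (∃ w', z = Sum.inr w' ∧ q w') := by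
  induction p with
  | nil => rintro w v rfl ⟨⟩
  | @cons x y _ hxy p ih =>
    rintro w v rfl rfl hw
    rcases y with w' | w'
    · by_cases hq' : q w'
      · obtain ⟨z, hz, hzp⟩ := ih w' v rfl rfl hq'
        exact ⟨z, by simp [Walk.support_cons, hz], hzp⟩
      · exact ⟨Sum.inl w', by simp [Walk.support_cons, p.start_mem_support], Or.inl ⟨w', rfl, hq'⟩⟩
    · have hq' : q w' := hq w w' hw hxy
      exact ⟨Sum.inr w', by simp [Walk.support_cons, p.start_mem_support], Or.inr ⟨w', rfl, hq'⟩⟩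

end Escape

/-- for distinct `u, v ∈ R`, `κ_G(u, v') > |R|` iff `v` is reachable
from `u` in `D` by a nontrivial directed path. -/
theorem stmt5 {R : Type*} [Fintype R] (A : R → R → Prop) (u v : R) (huv : u ≠ v) :
    Fintype.card R < localKappa (shiftGraph A) (Sum.inl u) (Sum.inr v) ↔
      Relation.TransGen A u v := by
  classical
  set S : Set ℕ := {m | ∃ P : Fin m → (shiftGraph A).Path (Sum.inl u) (Sum.inr v),
      Function.Injective P ∧ ∀ i j, i ≠ j →
        (P i : (shiftGraph A).Walk (Sum.inl u) (Sum.inr v)).interior ∩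
          (P j : (shiftGraph A).Walk (Sum.inl u) (Sum.inr v)).interior = ∅} with hSdef
  have hlk : localKappa (shiftGraph A) (Sum.inl u) (Sum.inr v) = sSup S := rfl
  haveI : DecidableEq (R ⊕ R) := Classical.decEq _
  haveI : DecidableRel (shiftGraph A).Adj := Classical.decRel _
  have hbdd : BddAbove S := by
    refine ⟨Fintype.card ((shiftGraph A).Path (Sum.inl u) (Sum.inr v)), ?_⟩
    rintro m ⟨P, hPinj, -⟩
    simpa using Fintype.card_le_of_injective P hPinj
  have hul : (Sum.inl u : R ⊕ R) ≠ Sum.inr v := by simp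
  constructor
  · -- connectivity implies reachability
    intro hlt
    rw [hlk] at hlt
    by_contra hreach
    have h0 : (0 : ℕ) ∈ S := ⟨fun i => i.elim0, fun i => i.elim0, fun i => i.elim0⟩
    obtain ⟨P, hPinj, hPdisj⟩ := Nat.sSup_mem ⟨0, h0⟩ hbdd
    set q : R → Prop := fun w => Relation.ReflTransGen A u w with hq_def
    have hq : ∀ a b, q a → (A a b ∨ a = b) → q b := by
      rintro a b ha (hab | rfl)
      · exact ha.tail hab
      · exact ha
    have hqu : q u := Relation.ReflTransGen.refl
    have hqv : ¬ q v := by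
      intro hv
      rcases (Relation.reflTransGen_iff_eq_or_transGen.mp hv) with rfl | ht
      · exact huv rfl
      · exact hreach ht
    have hz : ∀ i : Fin (sSup S), ∃ z ∈ (P i : (shiftGraph A).Walk (Sum.inl u)
        (Sum.inr v)).support,
        (∃ w', z = Sum.inl w' ∧ ¬ q w') ∨ (∃ w', z = Sum.inr w' ∧ q w') :=
      fun i => shift_escape q hq (P i : (shiftGraph A).Walk (Sum.inl u) (Sum.inr v))
        u v rfl rfl hqu
    choose z hzsup hzcut using hz
    have hzint : ∀ i, z i ∈ (P i : (shiftGraph A).Walk (Sum.inl u) (Sum.inr v)).interior := by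
      intro i
      refine ⟨hzsup i, ?_, ?_⟩
      · intro hzi
        rcases hzcut i with ⟨w', hw', hnq⟩ | ⟨w', hw', hq'⟩
        · rw [hzi] at hw'
          exact hnq (Sum.inl.inj hw' ▸ hqu)
        · rw [hzi] at hw'
          exact absurd hw' (by simp)
      · intro hzi
        rcases hzcut i with ⟨w', hw', hnq⟩ | ⟨w', hw', hq'⟩
        · rw [hzi] at hw'
          exact absurd hw' (by simp)
        · rw [hzi] at hw'
          exact hqv (Sum.inr.inj hw' ▸ hq')
    have hginj : Function.Injective (fun i => Sum.elim id id (z i) : Fin (sSup S) → R) := by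
      intro i j hij
      by_contra hne
      have hdisj := hPdisj i j hne
      have hzne : z i ≠ z j := by
        intro he
        have hmem : z i ∈ (P i : (shiftGraph A).Walk (Sum.inl u) (Sum.inr v)).interior ∩
            (P j : (shiftGraph A).Walk (Sum.inl u) (Sum.inr v)).interior :=
          ⟨hzint i, he ▸ hzint j⟩
        rw [hdisj] at hmem
        exact hmem
      simp only at hij
      rcases hzcut i with ⟨a, ha, hai⟩ | ⟨a, ha, hai⟩ <;>
          rcases hzcut j with ⟨b, hb, hbj⟩ | ⟨b, hb, hbj⟩ <;>
          rw [ha, hb] at hij hzne <;> simp only [Sum.elim_inl, Sum.elim_inr, id] at hij <;>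
          subst hij
      · exact hzne rfl
      · exact hai hbj
      · exact hbj hai
      · exact hzne rfl
    have hcard := Fintype.card_le_of_injective _ hginj
    simp only [Fintype.card_fin] at hcard
    omega
  · -- reachability implies connectivity
    intro h
    obtain ⟨k, f, hk, hf0, hfk, hch, hinj⟩ := exists_inj_chain_fn huv h
    set owner : R ⊕ R → Option R := Sum.elim (fun w => some w)
      (fun w => if w = u then none
        else if hw : ∃ i, 0 < i ∧ i ≤ k ∧ f i = w then some (f (hw.choose - 1)) else some w)
      with howner
    have ownerL : ∀ w, owner (Sum.inl w) = some w := fun w => rfl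
    have ownerRu : owner (Sum.inr u) = none := by simp [howner]
    have ownerRf : ∀ i, 0 < i → i ≤ k → owner (Sum.inr (f i)) = some (f (i - 1)) := by
      intro i hi0 hik
      have hne : f i ≠ u := by
        intro he
        have : i = 0 := hinj i 0 hik (Nat.zero_le k) (by rw [he, hf0])
        omega
      have hex : ∃ j, 0 < j ∧ j ≤ k ∧ f j = f i := ⟨i, hi0, hik, rfl⟩
      simp only [howner, Sum.elim_inr, if_neg hne, dif_pos hex]
      have hspec := hex.choose_spec
      have hchoose : hex.choose = i := hinj _ _ hspec.2.1 hik hspec.2.2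
      rw [hchoose]
    have ownerRw : ∀ w, w ≠ u → (¬ ∃ i, 0 < i ∧ i ≤ k ∧ f i = w) →
        owner (Sum.inr w) = some w := by
      intro w hwu hno
      simp only [howner, Sum.elim_inr, if_neg hwu, dif_neg hno]
    have hQex : ∀ o : Option R, ∃ p : (shiftGraph A).Path (Sum.inl u) (Sum.inr v),
        (p : (shiftGraph A).Walk (Sum.inl u) (Sum.inr v)).interior ⊆ owner ⁻¹' {o} ∧
        ((p : (shiftGraph A).Walk (Sum.inl u) (Sum.inr v)).interior = ∅ → o = some u) := by
      intro o
      rcases o with _ | w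
      · -- the path through inr u
        have h1 : (shiftGraph A).Adj (Sum.inl u) (Sum.inr u) := Or.inr rfl
        have h2 : (shiftGraph A).Adj (Sum.inr u) (Sum.inr v) := huv
        refine ⟨⟨Walk.cons h1 (Walk.cons h2 Walk.nil), walk3_isPath h1 h2 hul⟩, ?_, ?_⟩
        · show (Walk.cons h1 (Walk.cons h2 Walk.nil)).interior ⊆ owner ⁻¹' {none}
          rw [walk3_interior h1 h2]
          intro z hz
          rw [Set.mem_singleton_iff] at hz
          subst hz
          simp only [Set.mem_preimage, ownerRu, Set.mem_singleton_iff]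
        · intro hemp
          have hemp' : (Walk.cons h1 (Walk.cons h2 Walk.nil)).interior = ∅ := hemp
          rw [walk3_interior h1 h2] at hemp'
          exact absurd hemp' (Set.singleton_ne_empty _)
      · by_cases hwu : w = u
        · subst hwu
          by_cases hfv : f 1 = v
          · -- the direct edge, when u -> v is an arc
            have h1 : (shiftGraph A).Adj (Sum.inl w) (Sum.inr v) := by
              refine Or.inl ?_
              have := hch 0 hk
              rwa [hf0, hfv] at this
            refine ⟨⟨Walk.cons h1 Walk.nil, walk2_isPath h1⟩, ?_, fun _ => rfl⟩
            show (Walk.cons h1 Walk.nil).interior ⊆ owner ⁻¹' {some w}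
            rw [walk2_interior h1]
            exact Set.empty_subset _
          · -- the path through inr (f 1)
            have h1 : (shiftGraph A).Adj (Sum.inl w) (Sum.inr (f 1)) := by
              refine Or.inl ?_
              have := hch 0 hk
              rwa [hf0] at this
            have h2 : (shiftGraph A).Adj (Sum.inr (f 1)) (Sum.inr v) := hfv
            refine ⟨⟨Walk.cons h1 (Walk.cons h2 Walk.nil), walk3_isPath h1 h2 hul⟩, ?_,
              fun _ => rfl⟩
            show (Walk.cons h1 (Walk.cons h2 Walk.nil)).interior ⊆ owner ⁻¹' {some w}
            rw [walk3_interior h1 h2]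
            intro z hz
            rw [Set.mem_singleton_iff] at hz
            subst hz
            rw [Set.mem_preimage, ownerRf 1 one_pos hk]
            simp [hf0]
        · by_cases hwv : w = v
          · subst hwv
            -- the path through inl w (with w = v)
            have h1 : (shiftGraph A).Adj (Sum.inl u) (Sum.inl w) := Ne.symm hwu
            have h2 : (shiftGraph A).Adj (Sum.inl w) (Sum.inr w) := Or.inr rfl
            refine ⟨⟨Walk.cons h1 (Walk.cons h2 Walk.nil), walk3_isPath h1 h2 hul⟩, ?_, ?_⟩
            · show (Walk.cons h1 (Walk.cons h2 Walk.nil)).interior ⊆ owner ⁻¹' {some w}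
              rw [walk3_interior h1 h2]
              intro z hz
              rw [Set.mem_singleton_iff] at hz
              subst hz
              simp [Set.mem_preimage, ownerL]
            · intro hemp
              have hemp' : (Walk.cons h1 (Walk.cons h2 Walk.nil)).interior = ∅ := hemp
              rw [walk3_interior h1 h2] at hemp'
              exact absurd hemp' (Set.singleton_ne_empty _)
          · by_cases hmid : ∃ i, 0 < i ∧ i < k ∧ f i = w
            · obtain ⟨i, hi0, hik, hfi⟩ := hmid
              have h1 : (shiftGraph A).Adj (Sum.inl u) (Sum.inl w) := Ne.symm hwu
              by_cases hfv : f (i + 1) = v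
              · -- the path inl u - inl w - inr v
                have h2 : (shiftGraph A).Adj (Sum.inl w) (Sum.inr v) := by
                  refine Or.inl ?_
                  have := hch i hik
                  rwa [hfi, hfv] at this
                refine ⟨⟨Walk.cons h1 (Walk.cons h2 Walk.nil), walk3_isPath h1 h2 hul⟩, ?_, ?_⟩
                · show (Walk.cons h1 (Walk.cons h2 Walk.nil)).interior ⊆ owner ⁻¹' {some w}
                  rw [walk3_interior h1 h2]
                  intro z hz
                  rw [Set.mem_singleton_iff] at hz
                  subst hz
                  simp [Set.mem_preimage, ownerL]
                · intro hemp
                  have hemp' : (Walk.cons h1 (Walk.cons h2 Walk.nil)).interior = ∅ := hemp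
                  rw [walk3_interior h1 h2] at hemp'
                  exact absurd hemp' (Set.singleton_ne_empty _)
              · -- the path inl u - inl w - inr (f (i+1)) - inr v
                have h2 : (shiftGraph A).Adj (Sum.inl w) (Sum.inr (f (i + 1))) := by
                  refine Or.inl ?_
                  have := hch i hik
                  rwa [hfi] at this
                have h3 : (shiftGraph A).Adj (Sum.inr (f (i + 1))) (Sum.inr v) := hfv
                refine ⟨⟨Walk.cons h1 (Walk.cons h2 (Walk.cons h3 Walk.nil)),
                  walk4_isPath h1 h2 h3 hul (by simp) (by simp)⟩, ?_, ?_⟩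
                · show (Walk.cons h1 (Walk.cons h2 (Walk.cons h3 Walk.nil))).interior ⊆
                    owner ⁻¹' {some w}
                  rw [walk4_interior h1 h2 h3 (by simp) (by simp)]
                  rintro z (rfl | hz)
                  · simp [Set.mem_preimage, ownerL]
                  · rw [Set.mem_singleton_iff] at hz
                    subst hz
                    rw [Set.mem_preimage, ownerRf (i + 1) (by omega) (by omega)]
                    simp [Nat.add_sub_cancel, hfi]
                · intro hemp
                  have hemp' :
                      (Walk.cons h1 (Walk.cons h2 (Walk.cons h3 Walk.nil))).interior = ∅ := hemp
                  rw [walk4_interior h1 h2 h3 (by simp) (by simp)] at hemp'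
                  exact absurd hemp' (Set.insert_nonempty _ _).ne_empty
            · -- the path inl u - inl w - inr w - inr v
              have h1 : (shiftGraph A).Adj (Sum.inl u) (Sum.inl w) := Ne.symm hwu
              have h2 : (shiftGraph A).Adj (Sum.inl w) (Sum.inr w) := Or.inr rfl
              have h3 : (shiftGraph A).Adj (Sum.inr w) (Sum.inr v) := hwv
              have hno : ¬ ∃ i, 0 < i ∧ i ≤ k ∧ f i = w := by
                rintro ⟨i, hi0, hik, hfi⟩
                rcases lt_or_eq_of_le hik with hik' | rfl
                · exact hmid ⟨i, hi0, hik', hfi⟩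
                · exact hwv (hfi.symm.trans hfk)
              refine ⟨⟨Walk.cons h1 (Walk.cons h2 (Walk.cons h3 Walk.nil)),
                walk4_isPath h1 h2 h3 hul (by simp) (by simp)⟩, ?_, ?_⟩
              · show (Walk.cons h1 (Walk.cons h2 (Walk.cons h3 Walk.nil))).interior ⊆
                  owner ⁻¹' {some w}
                rw [walk4_interior h1 h2 h3 (by simp) (by simp)]
                rintro z (rfl | hz)
                · simp [Set.mem_preimage, ownerL]
                · rw [Set.mem_singleton_iff] at hz
                  subst hz
                  rw [Set.mem_preimage, ownerRw w hwu hno]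
                  simp
              · intro hemp
                have hemp' :
                    (Walk.cons h1 (Walk.cons h2 (Walk.cons h3 Walk.nil))).interior = ∅ := hemp
                rw [walk4_interior h1 h2 h3 (by simp) (by simp)] at hemp'
                exact absurd hemp' (Set.insert_nonempty _ _).ne_empty
    choose Q hQsub hQemp using hQex
    -- assemble the family of card R + 1 disjoint paths
    have hd : ∀ o₁ o₂ : Option R, o₁ ≠ o₂ →
        (Q o₁ : (shiftGraph A).Walk (Sum.inl u) (Sum.inr v)).interior ∩
          (Q o₂ : (shiftGraph A).Walk (Sum.inl u) (Sum.inr v)).interior = ∅ := by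
      intro o₁ o₂ hne
      ext z
      simp only [Set.mem_inter_iff, Set.mem_empty_iff_false, iff_false, not_and]
      intro h1 h2
      have e1 : owner z = o₁ := hQsub o₁ h1
      have e2 : owner z = o₂ := hQsub o₂ h2
      exact hne (e1 ▸ e2)
    have hQinj : Function.Injective Q := by
      intro o₁ o₂ he
      by_contra hne
      have hint : (Q o₁ : (shiftGraph A).Walk (Sum.inl u) (Sum.inr v)).interior =
          (Q o₂ : (shiftGraph A).Walk (Sum.inl u) (Sum.inr v)).interior := by rw [he]
      have hempty2 : (Q o₂ : (shiftGraph A).Walk (Sum.inl u) (Sum.inr v)).interior = ∅ := by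
        have := hd o₁ o₂ hne
        rwa [hint, Set.inter_self] at this
      have h1 := hQemp o₁ (by rw [hint]; exact hempty2)
      have h2 := hQemp o₂ hempty2
      exact hne (h1.trans h2.symm)
    have ecard : Fintype.card (Option R) = Fintype.card R + 1 := Fintype.card_option
    set e : Fin (Fintype.card R + 1) ≃ Option R := (Fintype.equivFinOfCardEq ecard).symm with he
    have hmem : Fintype.card R + 1 ∈ S := by
      refine ⟨fun i => Q (e i), ?_, ?_⟩
      · intro i j hij
        exact e.injective (hQinj hij)
      · intro i j hij
        exact hd (e i) (e j) (fun hee => hij (e.injective hee))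
    rw [hlk]
    have := le_csSup hbdd hmem
    omega
end

section
/- Fix k ≥ 1, p ≥ 1, a k-element set R, and DAGs D_1, …, D_p on R. In the combined graph G (the union over i of the connectivity-shift graphs of D_i on R ∪ R_i, sharing the clique on R), for each i and distinct u, v ∈ R, the maximum number of internally disjoint paths between u ∈ R and the copy v_i ∈ R_i equals κ_{D_i}(u, v) + k. -/
open SimpleGraph

section Aux
open List

lemma chain_transGen {R : Type*} {A : R → R → Prop} {x : R} {l : List R}
    (h : List.Chain (flip A) x l) : ∀ y ∈ l, Relation.TransGen A y x := by
  induction l generalizing x with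
  | nil => simp
  | cons b t ih =>
    obtain ⟨hab, ht⟩ := List.isChain_cons_cons.1 h
    intro y hy
    rcases List.mem_cons.1 hy with rfl | hy
    · exact Relation.TransGen.single hab
    · exact (ih ht y hy).tail hab

lemma nodup_of_chain'_flip {R : Type*} {A : R → R → Prop} (hA : DiAcyclic A) {l : List R}
    (h : List.Chain' (flip A) l) : l.Nodup := by
  induction l with
  | nil => simp
  | cons x t ih =>
    have h' : List.Chain (flip A) x t := h
    refine List.nodup_cons.2 ⟨fun hx => hA x (chain_transGen h' x hx), ih (List.IsChain.tail h)⟩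

lemma DiPath.ext' {R : Type*} {A : R → R → Prop} {u v : R} {P Q : DiPath A u v}
    (h : P.verts = Q.verts) : P = Q := by
  cases P; cases Q; simp_all

noncomputable instance {R : Type*} [Fintype R] (A : R → R → Prop) (u v : R) :
    Finite (DiPath A u v) := by
  classical
  refine Finite.of_injective
    (fun P => (⟨P.verts, P.nodup.of_cons⟩ : {l : List R // l.Nodup})) ?_
  intro P Q h
  exact DiPath.ext' (by simpa using h)

lemma diKappa_spec {R : Type*} [Fintype R] (A : R → R → Prop) (u v : R) :
    ∃ P : Fin (diKappa A u v) → DiPath A u v, Function.Injective P ∧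
      ∀ i j, i ≠ j → (P i).interior ∩ (P j).interior = ∅ := by
  have hb : BddAbove {m | ∃ P : Fin m → DiPath A u v, Function.Injective P ∧
      ∀ i j, i ≠ j → (P i).interior ∩ (P j).interior = ∅} := by
    refine ⟨Nat.card (DiPath A u v), fun m hm => ?_⟩
    obtain ⟨P, hP, -⟩ := hm
    simpa using Nat.card_le_card_of_injective P hP
  have hne : {m | ∃ P : Fin m → DiPath A u v, Function.Injective P ∧
      ∀ i j, i ≠ j → (P i).interior ∩ (P j).interior = ∅}.Nonempty :=
    ⟨0, Fin.elim0, fun a => a.elim0, fun a => a.elim0⟩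
  exact Nat.sSup_mem hne hb

lemma le_diKappa {R : Type*} [Fintype R] {A : R → R → Prop} {u v : R} {m : ℕ}
    (hm : ∃ P : Fin m → DiPath A u v, Function.Injective P ∧
      ∀ i j, i ≠ j → (P i).interior ∩ (P j).interior = ∅) : m ≤ diKappa A u v := by
  have hb : BddAbove {m | ∃ P : Fin m → DiPath A u v, Function.Injective P ∧
      ∀ i j, i ≠ j → (P i).interior ∩ (P j).interior = ∅} := by
    refine ⟨Nat.card (DiPath A u v), fun m hm => ?_⟩
    obtain ⟨P, hP, -⟩ := hm
    simpa using Nat.card_le_card_of_injective P hP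
  exact le_csSup hb hm

lemma le_localKappa {V : Type*} [Finite V] {G : SimpleGraph V} {s t : V} {m : ℕ}
    (hm : ∃ P : Fin m → G.Path s t, Function.Injective P ∧
      ∀ i j, i ≠ j → (P i : G.Walk s t).interior ∩ (P j : G.Walk s t).interior = ∅) :
    m ≤ localKappa G s t := by
  classical
  cases nonempty_fintype V
  have hb : BddAbove {m | ∃ P : Fin m → G.Path s t, Function.Injective P ∧
      ∀ i j, i ≠ j → (P i : G.Walk s t).interior ∩ (P j : G.Walk s t).interior = ∅} := by
    refine ⟨Nat.card (G.Path s t), fun m hm => ?_⟩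
    obtain ⟨P, hP, -⟩ := hm
    simpa using Nat.card_le_card_of_injective P hP
  exact le_csSup hb hm

lemma localKappa_le {V : Type*} {G : SimpleGraph V} {s t : V} {c : ℕ}
    (h : ∀ m, (∃ P : Fin m → G.Path s t, Function.Injective P ∧
      ∀ i j, i ≠ j → (P i : G.Walk s t).interior ∩ (P j : G.Walk s t).interior = ∅) → m ≤ c) :
    localKappa G s t ≤ c := by
  refine csSup_le ⟨0, Fin.elim0, fun a => a.elim0, fun a => a.elim0⟩ h

section Core
open List

variable {R : Type*} {m : ℕ}

lemma rtg_det {α : Type*} {r : α → α → Prop} (hdet : ∀ x y y', r x y → r x y' → y = y')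
    {x c c' : α} (h1 : Relation.ReflTransGen r x c) (h2 : Relation.ReflTransGen r x c')
    (hc : ∀ y, ¬ r c y) (hc' : ∀ y, ¬ r c' y) : c = c' := by
  have H : ∀ a, Relation.ReflTransGen r a c → Relation.ReflTransGen r a c' → c = c' := by
    intro a h
    induction h using Relation.ReflTransGen.head_induction_on with
    | refl =>
      intro h2
      rcases h2.cases_head with rfl | ⟨z, hz, -⟩
      · rfl
      · exact absurd hz (hc z)
    | head hxy hyc ih =>
      rename_i x' y' 
      intro h2
      rcases h2.cases_head with rfl | ⟨z, hz, hzc'⟩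
      · exact absurd hxy (hc' _)
      · exact ih (by rwa [hdet _ _ _ hz hxy] at hzc')
  exact H x h1 h2

open Classical in
noncomputable def nxt (u v : R) (f : Fin m → R × R) (a : R) : Option R :=
  if h : a ≠ u ∧ a ≠ v ∧ ∃ j, (f j).2 = a ∧ (f j).1 ≠ a then some (f h.2.2.choose).1 else none

lemma nxt_spec {u v : R} {f : Fin m → R × R} {a b : R} (h : nxt u v f a = some b) :
    (∃ j, f j = (b, a)) ∧ b ≠ a ∧ a ≠ u ∧ a ≠ v := by
  unfold nxt at h
  split at h
  · rename_i hc
    obtain ⟨hau, hav, hex⟩ := hc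
    have hs := hex.choose_spec
    injection h with h
    subst h
    exact ⟨⟨hex.choose, Prod.ext rfl hs.1⟩, hs.2, hau, hav⟩
  · exact absurd h (by simp)

lemma nxt_none_u {u v : R} {f : Fin m → R × R} : nxt u v f u = none := by
  unfold nxt; rw [dif_neg]; simp

lemma nxt_none_of {u v : R} {f : Fin m → R × R} {a : R} (hau : a ≠ u) (hav : a ≠ v)
    (h : nxt u v f a = none) : ∀ j, (f j).2 = a → (f j).1 = a := by
  intro j hj
  by_contra hne
  unfold nxt at h
  rw [dif_pos ⟨hau, hav, j, hj, hne⟩] at h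
  simp at h

noncomputable def back (u v : R) (f : Fin m → R × R) : ℕ → R → List R
  | 0, a => [a]
  | n+1, a =>
    match nxt u v f a with
    | none => [a]
    | some b => a :: back u v f n b

variable {u v : R} {f : Fin m → R × R}

lemma back_ne_nil (n : ℕ) (a : R) : back u v f n a ≠ [] := by
  cases n with
  | zero => simp [back]
  | succ n => cases h : nxt u v f a <;> simp [back, h]

lemma back_cons (n : ℕ) (a : R) : ∃ rest, back u v f n a = a :: rest := by
  cases n with
  | zero => exact ⟨[], rfl⟩
  | succ n =>
    cases h : nxt u v f a with
    | none => exact ⟨[], by simp [back, h]⟩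
    | some b => exact ⟨back u v f n b, by simp [back, h]⟩

lemma back_head (n : ℕ) (a : R) : (back u v f n a).head? = some a := by
  obtain ⟨rest, hr⟩ := back_cons (u := u) (v := v) (f := f) n a
  simp [hr]

lemma back_mem_self (n : ℕ) (a : R) : a ∈ back u v f n a := by
  obtain ⟨rest, hr⟩ := back_cons (u := u) (v := v) (f := f) n a
  simp [hr]

lemma back_of_none {a : R} (h : nxt u v f a = none) (n : ℕ) : back u v f n a = [a] := by
  cases n <;> simp [back, h]

variable {A : R → R → Prop}

lemma back_chain' (harc : ∀ a b, nxt u v f a = some b → A b a) (n : ℕ) (a : R) :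
    List.Chain' (flip A) (back u v f n a) := by
  induction n generalizing a with
  | zero => simp [back, List.Chain']
  | succ n ih =>
    cases h : nxt u v f a with
    | none => simp [back, h, List.Chain']
    | some b =>
      rw [show back u v f (n+1) a = a :: back u v f n b from by simp [back, h]]
      refine List.isChain_cons.2 ⟨?_, ih b⟩
      intro y hy
      rw [back_head] at hy
      cases hy
      exact harc a b h

lemma back_nodup (hA : DiAcyclic A) (harc : ∀ a b, nxt u v f a = some b → A b a)
    (n : ℕ) (a : R) : (back u v f n a).Nodup :=
  nodup_of_chain'_flip hA (back_chain' harc n a)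

lemma back_mem (harc : ∀ a b, nxt u v f a = some b → A b a) {n : ℕ} {a x : R}
    (hx : x ∈ back u v f n a) : x = a ∨ Relation.TransGen A x a := by
  obtain ⟨rest, hr⟩ := back_cons (u := u) (v := v) (f := f) n a
  rw [hr] at hx
  rcases List.mem_cons.1 hx with rfl | hx
  · exact Or.inl rfl
  · have hch : List.Chain (flip A) a rest := by
      have := back_chain' harc n a (A := A)
      rwa [hr] at this
    exact Or.inr (chain_transGen hch x hx)

def stp (u v : R) (f : Fin m → R × R) (x y : R) : Prop :=
  x ≠ u ∧ y ≠ v ∧ ∃ j, f j = (x, y)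

lemma back_reach {n : ℕ} {a x : R} (hx : x ∈ back u v f n a) :
    x = u ∨ Relation.ReflTransGen (stp u v f) x a := by
  induction n generalizing a with
  | zero =>
    simp [back] at hx
    subst hx
    exact Or.inr Relation.ReflTransGen.refl
  | succ n ih =>
    cases h : nxt u v f a with
    | none =>
      rw [back_of_none h] at hx
      simp at hx
      subst hx
      exact Or.inr Relation.ReflTransGen.refl
    | some b =>
      rw [show back u v f (n+1) a = a :: back u v f n b from by simp [back, h]] at hx
      rcases List.mem_cons.1 hx with rfl | hx
      · exact Or.inr Relation.ReflTransGen.refl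
      · by_cases hbu : b = u
        · subst hbu
          rw [back_of_none nxt_none_u] at hx
          simp at hx
          subst hx
          exact Or.inl rfl
        · rcases ih hx with h' | h'
          · exact Or.inl h'
          · obtain ⟨hj, -, -, hav⟩ := nxt_spec h
            exact Or.inr (h'.tail ⟨hbu, hav, hj⟩)

lemma back_last_spec {n : ℕ} {a x : R} (hx : (back u v f n a).getLast? = some x) :
    nxt u v f x = none ∨ (back u v f n a).length = n + 1 := by
  induction n generalizing a with
  | zero =>
    exact Or.inr (by simp [back])
  | succ n ih =>
    cases h : nxt u v f a with
    | none =>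
      rw [back_of_none h] at hx
      simp at hx
      subst hx
      exact Or.inl h
    | some b =>
      rw [show back u v f (n+1) a = a :: back u v f n b from by simp [back, h]] at hx
      obtain ⟨rest, hr⟩ := back_cons (u := u) (v := v) (f := f) n b
      rw [hr] at hx
      rw [List.getLast?_cons_cons] at hx
      rw [← hr] at hx
      rcases ih hx with h' | h'
      · exact Or.inl h'
      · right
        rw [show back u v f (n+1) a = a :: back u v f n b from by simp [back, h]]
        simp [h']

lemma back_pred {n : ℕ} {a x : R} (hx : x ∈ back u v f n a) :
    x = a ∨ ∃ y ∈ back u v f n a, nxt u v f y = some x := by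
  induction n generalizing a with
  | zero =>
    simp [back] at hx
    exact Or.inl hx
  | succ n ih =>
    cases h : nxt u v f a with
    | none =>
      rw [back_of_none h] at hx
      simp at hx
      exact Or.inl hx
    | some b =>
      rw [show back u v f (n+1) a = a :: back u v f n b from by simp [back, h]] at hx
      rcases List.mem_cons.1 hx with rfl | hx
      · exact Or.inl rfl
      · rcases ih hx with rfl | ⟨y, hy, hnxt⟩
        · refine Or.inr ⟨a, ?_, h⟩
          exact back_mem_self (n+1) a
        · refine Or.inr ⟨y, ?_, hnxt⟩
          rw [show back u v f (n+1) a = a :: back u v f n b from by simp [back, h]]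
          exact List.mem_cons_of_mem a hy

end Core

section Core2
open List

lemma mem_of_getLast?' {α : Type*} {l : List α} {x : α} (h : l.getLast? = some x) : x ∈ l := by
  obtain ⟨hne, hx⟩ := List.mem_getLast?_eq_getLast (show x ∈ l.getLast? from h)
  rw [hx]
  exact List.getLast_mem hne

lemma nxt_none_v {R : Type*} {m : ℕ} {u v : R} {f : Fin m → R × R} : nxt u v f v = none := by
  unfold nxt; rw [dif_neg]; simp

lemma exists_dipath_of_chain {R : Type*} {A : R → R → Prop} {u v : R} {l : List R}
    (hne : l ≠ []) (hch : List.Chain' (flip A) l) (hnd : l.Nodup)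
    (hlast : l.getLast hne = u) (hv : v ∉ l)
    (harc : ∀ c ∈ l.head?, A c v) :
    ∃ P : DiPath A u v, u :: P.verts = l.reverse ++ [v] := by
  have hkey : l.reverse = u :: l.dropLast.reverse := by
    conv_lhs => rw [← List.dropLast_append_getLast hne]
    rw [List.reverse_append, hlast]
    simp
  have hkey2 : u :: (l.dropLast.reverse ++ [v]) = l.reverse ++ [v] := by
    rw [hkey]; rfl
  refine ⟨⟨l.dropLast.reverse ++ [v], ?_, ?_, ?_⟩, hkey2⟩
  · -- chain
    have h2 : List.Chain' A (l.reverse ++ [v]) := by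
      show List.IsChain A _
      rw [List.isChain_append]
      refine ⟨List.isChain_reverse.mpr hch, List.isChain_singleton v, ?_⟩
      intro x hx y hy
      rw [List.getLast?_reverse] at hx
      simp only [List.head?_cons, Option.mem_def, Option.some.injEq] at hy
      subst hy
      exact harc x hx
    rw [← hkey2] at h2
    exact h2
  · -- ends
    have h5 : (u :: (l.dropLast.reverse ++ [v])).getLast? = some v := by
      rw [hkey2]
      exact List.getLast?_concat
    have h6 := List.getLast?_eq_getLast (l := u :: (l.dropLast.reverse ++ [v])) (List.cons_ne_nil _ _)
    rw [h5] at h6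
    exact (Option.some.inj h6).symm
  · -- nodup
    rw [show (u :: (l.dropLast.reverse ++ [v])).Nodup = (l.reverse ++ [v]).Nodup from by rw [hkey2]]
    refine List.Nodup.append (by simpa using hnd) (List.nodup_singleton v) ?_
    intro x hx hx'
    simp only [List.mem_singleton] at hx'
    subst hx'
    exact absurd (List.mem_reverse.1 hx) hv

lemma units_upper {R : Type*} [Fintype R] {A : R → R → Prop} {u v : R} {m : ℕ}
    {f : Fin m → R × R} (hA : DiAcyclic A) (huv : u ≠ v)
    (h1 : ∀ j, A (f j).1 (f j).2 ∨ (f j).1 = (f j).2)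
    (h2 : ∀ j j', (f j).1 ≠ u → (f j).1 = (f j').1 → j = j')
    (h3 : ∀ j j', (f j).2 ≠ v → (f j).2 = (f j').2 → j = j')
    (h4 : ∀ j j', f j = (u, v) → f j' = (u, v) → j = j') :
    m ≤ diKappa A u v + Fintype.card R := by
  classical
  set K := Fintype.card R with hK
  have harc : ∀ a b, nxt u v f a = some b → A b a := by
    intro a b h
    obtain ⟨⟨j, hj⟩, hba, -, -⟩ := nxt_spec h
    rcases h1 j with h' | h'
    · rw [hj] at h'; exact h'
    · rw [hj] at h'; exact absurd h' hba
  set C : Fin m → List R := fun j => back u v f K (f j).1 with hC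
  have hCne : ∀ j, C j ≠ [] := fun j => back_ne_nil K (f j).1
  have hstepless : ∀ j, (f j).2 = v → (f j).1 ≠ u → ∀ y, ¬ stp u v f (f j).1 y := by
    rintro j hv hne y ⟨hyu, hyv, j', hj'⟩
    have he : j' = j := h2 j' j (by rw [hj']; exact hne) (by rw [hj'])
    rw [he] at hj'
    have h9 : (f j).2 = y := by rw [hj']
    exact hyv (by rw [← h9, hv])
  have hdet : ∀ x y y', stp u v f x y → stp u v f x y' → y = y' := by
    rintro x y y' ⟨hxu, hyv, j, hj⟩ ⟨-, hy'v, j', hj'⟩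
    have he : j = j' := h2 j j' (by rw [hj]; exact hxu) (by rw [hj, hj'])
    rw [he, hj'] at hj
    exact ((Prod.ext_iff.1 hj).2).symm
  have hCu : ∀ j, (f j).1 = u → C j = [u] := by
    intro j hj
    show back u v f K (f j).1 = [u]
    rw [hj, back_of_none nxt_none_u]
  have hCC : ∀ j j', (f j).2 = v → (f j').2 = v → ∀ x, x ≠ u → x ∈ C j → x ∈ C j' → j = j' := by
    intro j j' hv hv' x hxu hxj hxj'
    by_cases hc : (f j).1 = u
    · rw [hCu j hc] at hxj; simp at hxj; exact absurd hxj hxu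
    by_cases hc' : (f j').1 = u
    · rw [hCu j' hc'] at hxj'; simp at hxj'; exact absurd hxj' hxu
    rcases back_reach hxj with he | rtg
    · exact absurd he hxu
    rcases back_reach hxj' with he | rtg'
    · exact absurd he hxu
    have heq : (f j).1 = (f j').1 :=
      rtg_det hdet rtg rtg' (hstepless j hv hc) (hstepless j' hv' hc')
    exact h2 j j' hc heq
  set good : Fin m → Prop := fun j => (C j).getLast? = some u with hgood
  have hc0v : ∀ j, (f j).2 = v → good j → (f j).1 ≠ v := by
    intro j hv hg hc
    have hn : nxt u v f (f j).1 = none := by rw [hc]; exact nxt_none_v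
    have hcj : C j = [(f j).1] := back_of_none hn K
    have hg' : (C j).getLast? = some u := hg
    rw [hcj] at hg'
    simp only [List.getLast?_singleton, Option.some.injEq] at hg'
    exact huv (by rw [← hg', hc])
  have harcv : ∀ j, (f j).2 = v → good j → A (f j).1 v := by
    intro j hv hg
    rcases h1 j with h' | h'
    · rwa [hv] at h'
    · exact absurd (h'.trans hv) (hc0v j hv hg)
  have hvnot : ∀ j, (f j).2 = v → good j → v ∉ C j := by
    intro j hv hg hmem
    rcases back_mem harc hmem with he | htg
    · exact hc0v j hv hg he.symm
    · exact hA v (htg.tail (harcv j hv hg))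
  set T := {j : Fin m // (f j).2 = v ∧ good j} with hT
  have hdip : ∀ j : T, ∃ P : DiPath A u v, u :: P.verts = (C j.1).reverse ++ [v] := by
    rintro ⟨j, hv, hg⟩
    refine exists_dipath_of_chain (hCne j) (back_chain' harc K (f j).1)
      (back_nodup hA harc K (f j).1) ?_ (hvnot j hv hg) ?_
    · have h6 := List.getLast?_eq_getLast (l := C j) (hCne j)
      rw [hg] at h6
      exact (Option.some.inj h6).symm
    · intro c hc
      have hh := back_head (u := u) (v := v) (f := f) K (f j).1
      rw [show (back u v f K (f j).1) = C j from rfl, hc] at hh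
      cases Option.some.inj hh
      exact harcv j hv hg
  choose Φ hΦ using hdip
  have hint : ∀ (j : T) (x : R), x ∈ (Φ j).interior ↔ (x ∈ C j.1 ∧ x ≠ u ∧ x ≠ v) := by
    intro j x
    unfold DiPath.interior
    simp only [Set.mem_setOf_eq]
    constructor
    · rintro ⟨hx, hxu, hxv⟩
      rw [hΦ j] at hx
      simp only [List.mem_append, List.mem_reverse, List.mem_singleton] at hx
      rcases hx with hx | hx
      · exact ⟨hx, hxu, hxv⟩
      · exact absurd hx hxv
    · rintro ⟨hx, hxu, hxv⟩
      refine ⟨?_, hxu, hxv⟩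
      rw [hΦ j]
      simp [hx]
  have hΦinj : Function.Injective Φ := by
    intro a b hab
    have hCeq : C a.1 = C b.1 := by
      have h' := hΦ a
      rw [hab, hΦ b] at h'
      exact (List.reverse_injective (List.append_cancel_right h')).symm
    have hh : (f a.1).1 = (f b.1).1 := by
      have ha := back_head (u := u) (v := v) (f := f) K (f a.1).1
      have hb := back_head (u := u) (v := v) (f := f) K (f b.1).1
      rw [show (back u v f K (f a.1).1) = C a.1 from rfl, hCeq] at ha
      rw [show (back u v f K (f b.1).1) = C b.1 from rfl] at hb
      rw [ha] at hb
      exact Option.some.inj hb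
    by_cases hcu : (f a.1).1 = u
    · exact Subtype.ext (h4 a.1 b.1 (Prod.ext hcu a.2.1) (Prod.ext (by rw [← hh, hcu]) b.2.1))
    · exact Subtype.ext (h2 a.1 b.1 hcu hh)
  have hΦdis : ∀ (a b : T), a ≠ b → (Φ a).interior ∩ (Φ b).interior = ∅ := by
    intro a b hab
    ext x
    simp only [Set.mem_inter_iff, Set.mem_empty_iff_false, iff_false, not_and]
    intro hxa hxb
    rw [hint] at hxa hxb
    exact hab (Subtype.ext (hCC a.1 b.1 a.2.1 b.2.1 x hxa.2.1 hxa.1 hxb.1))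
  have hTle : Fintype.card T ≤ diKappa A u v := by
    refine le_diKappa ⟨fun i => Φ ((Fintype.equivFin T).symm i), ?_, ?_⟩
    · exact hΦinj.comp (Equiv.injective _)
    · intro i j hij
      exact hΦdis _ _ (fun h => hij ((Fintype.equivFin T).symm.injective h))
  set φ : Fin m → R ⊕ T := fun j =>
    if h : (f j).2 = v ∧ good j then Sum.inr ⟨j, h⟩
    else if hv : (f j).2 = v then Sum.inl ((C j).getLast (hCne j))
    else Sum.inl (f j).2 with hφ
  have hbadlemma : ∀ a b : Fin m, (f a).2 = v → ¬ good a → (f b).2 ≠ v →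
      (f b).2 = (C a).getLast (hCne a) → False := by
    intro a b hav hga hbv hx'
    set x := (C a).getLast (hCne a) with hxdef
    have hxlast : (C a).getLast? = some x := List.getLast?_eq_getLast (hCne a)
    have hxu : x ≠ u := by
      intro h
      apply hga
      show (C a).getLast? = some u
      rw [hxlast, h]
    have hxv : x ≠ v := fun h => hbv (by rw [hx', h])
    have hnone : nxt u v f x = none := by
      rcases back_last_spec (show (back u v f K (f a).1).getLast? = some x from hxlast) with h' | h'
      · exact h'
      · have hnd := back_nodup hA harc K (f a).1 (A := A)
        have := hnd.length_le_card
        rw [h'] at this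
        omega
    have hfb : (f b).1 = x := nxt_none_of hxu hxv hnone b hx'
    have hxa : x ∈ C a := mem_of_getLast?' hxlast
    rcases back_pred hxa with he | ⟨y, hy, hnxt⟩
    · have heq : b = a := h2 b a (by rw [hfb]; exact hxu) (by rw [hfb, ← he])
      rw [heq] at hbv
      exact hbv hav
    · obtain ⟨⟨j₂, hj₂⟩, hne2, -, -⟩ := nxt_spec hnxt
      have heq : b = j₂ := h2 b j₂ (by rw [hfb]; exact hxu) (by rw [hfb, hj₂])
      have : (f b).2 = y := by rw [heq, hj₂]
      rw [hx'] at this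
      exact hne2 this
  have hφinj : Function.Injective φ := by
    intro a b hab
    simp only [hφ] at hab
    by_cases ha : (f a).2 = v ∧ good a <;> by_cases hb : (f b).2 = v ∧ good b
    · rw [dif_pos ha, dif_pos hb] at hab
      exact congrArg Subtype.val (Sum.inr.inj hab)
    · rw [dif_pos ha, dif_neg hb] at hab
      split at hab <;> simp at hab
    · rw [dif_pos hb, dif_neg ha] at hab
      split at hab <;> simp at hab
    · rw [dif_neg ha, dif_neg hb] at hab
      by_cases hav : (f a).2 = v <;> by_cases hbv : (f b).2 = v
      · rw [dif_pos hav, dif_pos hbv] at hab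
        have hx := Sum.inl.inj hab
        have hga : ¬ good a := fun hg => ha ⟨hav, hg⟩
        have hxu : (C a).getLast (hCne a) ≠ u := by
          intro h
          apply hga
          show (C a).getLast? = some u
          rw [List.getLast?_eq_getLast (hCne a), h]
        refine hCC a b hav hbv _ hxu (List.getLast_mem (hCne a)) ?_
        rw [hx]
        exact List.getLast_mem (hCne b)
      · rw [dif_pos hav, dif_neg hbv] at hab
        exact absurd ((Sum.inl.inj hab).symm) (fun h => hbadlemma a b hav (fun hg => ha ⟨hav, hg⟩) hbv h)
      · rw [dif_pos hbv, dif_neg hav] at hab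
        exact absurd (Sum.inl.inj hab) (fun h => hbadlemma b a hbv (fun hg => hb ⟨hbv, hg⟩) hav h)
      · rw [dif_neg hav, dif_neg hbv] at hab
        exact h3 a b hav (Sum.inl.inj hab)
  have hcard := Fintype.card_le_of_injective φ hφinj
  rw [Fintype.card_sum, Fintype.card_fin] at hcard
  omega

end Core2

section Lower
open List SimpleGraph

variable {R : Type*} {p : ℕ} {A : Fin p → R → R → Prop} {i : Fin p} {u v : R}

lemma comb_adj_ll {a b : R} : (combGraph p A).Adj (Sum.inl a) (Sum.inl b) ↔ a ≠ b := Iff.rfl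

lemma comb_adj_lr {a b : R} {j : Fin p} :
    (combGraph p A).Adj (Sum.inl a) (Sum.inr (j, b)) ↔ (A j a b ∨ a = b) := Iff.rfl

lemma comb_adj_rl {a b : R} {j : Fin p} :
    (combGraph p A).Adj (Sum.inr (j, b)) (Sum.inl a) ↔ (A j a b ∨ a = b) := Iff.rfl

lemma comb_adj_rr {a b : R} {j j' : Fin p} :
    (combGraph p A).Adj (Sum.inr (j, a)) (Sum.inr (j', b)) ↔ j = j' ∧ a ≠ b := Iff.rfl

open Classical in
lemma exists_unitPath (huv : u ≠ v) {a b : R} (hab : A i a b ∨ a = b) :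
    ∃ P : (combGraph p A).Path (Sum.inl u) (Sum.inr (i, v)),
      (P : (combGraph p A).Walk (Sum.inl u) (Sum.inr (i, v))).interior =
        (if a = u then (∅ : Set (R ⊕ Fin p × R)) else {Sum.inl a}) ∪
        (if b = v then (∅ : Set (R ⊕ Fin p × R)) else {Sum.inr (i, b)}) := by
  by_cases hau : a = u <;> by_cases hbv : b = v
  · subst hau; subst hbv
    have hadj : (combGraph p A).Adj (Sum.inl a) (Sum.inr (i, b)) := comb_adj_lr.2 hab
    refine ⟨⟨Walk.cons hadj Walk.nil, ?_⟩, ?_⟩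
    · simp [Walk.isPath_def]
    · rw [if_pos rfl, if_pos rfl, Set.empty_union]
      ext x
      simp only [Walk.interior, Walk.support_cons, Walk.support_nil, Set.mem_setOf_eq,
        List.mem_cons, List.not_mem_nil, or_false, Set.mem_empty_iff_false, iff_false, not_and]
      rintro (rfl | rfl) h1 h2
      · exact absurd rfl h1
      · exact absurd rfl h2
  · subst hau
    have h1 : (combGraph p A).Adj (Sum.inl a) (Sum.inr (i, b)) := comb_adj_lr.2 hab
    have h2 : (combGraph p A).Adj (Sum.inr (i, b)) (Sum.inr (i, v)) := comb_adj_rr.2 ⟨rfl, hbv⟩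
    refine ⟨⟨Walk.cons h1 (Walk.cons h2 Walk.nil), ?_⟩, ?_⟩
    · simp [Walk.isPath_def, hbv]
    · rw [if_pos rfl, if_neg hbv, Set.empty_union]
      ext x
      simp only [Walk.interior, Walk.support_cons, Walk.support_nil, Set.mem_setOf_eq,
        List.mem_cons, List.not_mem_nil, or_false, Set.mem_singleton_iff]
      constructor
      · rintro ⟨(rfl | rfl | rfl), hx1, hx2⟩
        · exact absurd rfl hx1
        · rfl
        · exact absurd rfl hx2
      · rintro rfl
        refine ⟨by tauto, by simp, by simp [hbv]⟩
  · subst hbv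
    have h1 : (combGraph p A).Adj (Sum.inl u) (Sum.inl a) := comb_adj_ll.2 (Ne.symm hau)
    have h2 : (combGraph p A).Adj (Sum.inl a) (Sum.inr (i, b)) := comb_adj_lr.2 hab
    refine ⟨⟨Walk.cons h1 (Walk.cons h2 Walk.nil), ?_⟩, ?_⟩
    · simp [Walk.isPath_def, hau, Ne.symm hau]
    · rw [if_neg hau, if_pos rfl, Set.union_empty]
      ext x
      simp only [Walk.interior, Walk.support_cons, Walk.support_nil, Set.mem_setOf_eq,
        List.mem_cons, List.not_mem_nil, or_false, Set.mem_singleton_iff]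
      constructor
      · rintro ⟨(rfl | rfl | rfl), hx1, hx2⟩
        · exact absurd rfl hx1
        · rfl
        · exact absurd rfl hx2
      · rintro rfl
        refine ⟨by tauto, by simp [hau], by simp⟩
  · have h1 : (combGraph p A).Adj (Sum.inl u) (Sum.inl a) := comb_adj_ll.2 (Ne.symm hau)
    have h2 : (combGraph p A).Adj (Sum.inl a) (Sum.inr (i, b)) := comb_adj_lr.2 hab
    have h3 : (combGraph p A).Adj (Sum.inr (i, b)) (Sum.inr (i, v)) := comb_adj_rr.2 ⟨rfl, hbv⟩
    refine ⟨⟨Walk.cons h1 (Walk.cons h2 (Walk.cons h3 Walk.nil)), ?_⟩, ?_⟩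
    · simp [Walk.isPath_def, hau, hbv, Ne.symm hau]
    · rw [if_neg hau, if_neg hbv]
      ext x
      simp only [Walk.interior, Walk.support_cons, Walk.support_nil, Set.mem_setOf_eq,
        List.mem_cons, List.not_mem_nil, or_false, Set.mem_union, Set.mem_singleton_iff]
      constructor
      · rintro ⟨(rfl | rfl | rfl | rfl), hx1, hx2⟩
        · exact absurd rfl hx1
        · exact Or.inl rfl
        · exact Or.inr rfl
        · exact absurd rfl hx2
      · rintro (rfl | rfl)
        · exact ⟨by tauto, by simp [hau], by simp⟩
        · exact ⟨by tauto, by simp, by simp [hbv]⟩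

end Lower

section Extract
open List SimpleGraph

variable {R : Type*} {p : ℕ} {A : Fin p → R → R → Prop} {i : Fin p} {u v : R}

def lastCrossAux : R → List (R ⊕ Fin p × R) → Option (R × R)
  | _, [] => none
  | b, (Sum.inl a) :: _ => some (a, b)
  | _, (Sum.inr (_, b')) :: rest => lastCrossAux b' rest

lemma lastCrossAux_spec (l : List (R ⊕ Fin p × R)) (b : R) (hul : Sum.inl u ∈ l)
    (hch : List.Chain ((combGraph p A).Adj) (Sum.inr (i, b)) l) :
    ∃ a c, lastCrossAux (R := R) (p := p) b l = some (a, c) ∧ (A i a c ∨ a = c) ∧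
      Sum.inl a ∈ l ∧
      ((c = b ∧ ∃ l', l = Sum.inl a :: l') ∨ Sum.inr (i, c) ∈ l) := by
  induction l generalizing b i with
  | nil => simp at hul
  | cons x rest ih =>
    rcases List.chain_cons.1 hch with ⟨hadj, hch'⟩
    match x with
    | Sum.inl a =>
      refine ⟨a, b, rfl, comb_adj_rl.1 hadj, List.mem_cons_self, Or.inl ⟨rfl, rest, rfl⟩⟩
    | Sum.inr (j', b') =>
      obtain ⟨hji, hbb⟩ := comb_adj_rr.1 hadj
      subst hji
      have hul' : Sum.inl u ∈ rest := by
        rcases List.mem_cons.1 hul with h | h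
        · exact absurd h (by simp)
        · exact h
      obtain ⟨a, c, heq, harc, hmem, hc⟩ := ih b' hul' hch'
      refine ⟨a, c, heq, harc, List.mem_cons_of_mem _ hmem, ?_⟩
      rcases hc with ⟨rfl, l', hl'⟩ | hmem'
      · exact Or.inr (List.mem_cons_self)
      · exact Or.inr (List.mem_cons_of_mem _ hmem')

lemma walk_support_pair {V : Type*} {G : SimpleGraph V} {s t : V} (W : G.Walk s t)
    (h : W.support = [s, t]) : ∀ (W' : G.Walk s t), W'.support = [s, t] → W = W' := by
  intro W' h'
  cases W with
  | nil => simp at h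
  | cons hadj W1 =>
    rw [Walk.support_cons] at h
    have h1 : W1.support = [t] := by injection h
    cases W1 with
    | nil =>
      cases W' with
      | nil => simp at h'
      | cons hadj' W1' =>
        rw [Walk.support_cons] at h'
        have h1' : W1'.support = [t] := by injection h'
        cases W1' with
        | nil => rfl
        | cons h2' W2' => simp [Walk.support_cons] at h1'
    | cons h2 W2 => simp [Walk.support_cons] at h1

lemma paths_to_units [Fintype R] (huv : u ≠ v) {m : ℕ}
    (P : Fin m → (combGraph p A).Path (Sum.inl u) (Sum.inr (i, v)))
    (hinj : Function.Injective P)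
    (hdis : ∀ a b, a ≠ b →
      (P a : (combGraph p A).Walk (Sum.inl u) (Sum.inr (i, v))).interior ∩
      (P b : (combGraph p A).Walk (Sum.inl u) (Sum.inr (i, v))).interior = ∅) :
    ∃ f : Fin m → R × R,
      (∀ j, A i (f j).1 (f j).2 ∨ (f j).1 = (f j).2) ∧
      (∀ j j', (f j).1 ≠ u → (f j).1 = (f j').1 → j = j') ∧
      (∀ j j', (f j).2 ≠ v → (f j).2 = (f j').2 → j = j') ∧
      (∀ j j', f j = (u, v) → f j' = (u, v) → j = j') := by
  classical
  let W : Fin m → (combGraph p A).Walk (Sum.inl u) (Sum.inr (i, v)) := fun j => (P j : _)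
  have hrev : ∀ j : Fin m, (W j).support.reverse =
      Sum.inr (i, v) :: ((W j).support.reverse.tail) := by
    intro j
    have h1 : (W j).support.reverse.head? = some (Sum.inr (i, v)) := by
      rw [List.head?_reverse]
      rw [List.getLast?_eq_getLast (Walk.support_ne_nil _), Walk.getLast_support]
    obtain ⟨x, rest, hxr⟩ : ∃ x rest, (W j).support.reverse = x :: rest := by
      rcases hE : (W j).support.reverse with _ | ⟨x, rest⟩
      · rw [hE] at h1; simp at h1
      · exact ⟨x, rest, rfl⟩
    rw [hxr] at h1 ⊢
    simp only [List.head?_cons, Option.some.injEq] at h1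
    rw [h1]
    rfl
  have hchain : ∀ j : Fin m,
      List.Chain (combGraph p A).Adj (Sum.inr (i, v)) ((W j).support.reverse.tail) := by
    intro j
    have h1 : List.Chain' (combGraph p A).Adj (W j).support.reverse := by
      show List.IsChain _ _
      rw [List.isChain_reverse]
      exact (Walk.isChain_adj_support _).imp (fun a b hab => hab.symm)
    rw [hrev j] at h1
    exact h1
  have hmemu : ∀ j : Fin m, Sum.inl u ∈ (W j).support.reverse.tail := by
    intro j
    have h1 : Sum.inl u ∈ (W j).support.reverse := by
      rw [List.mem_reverse]
      exact Walk.start_mem_support _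
    rw [hrev j] at h1
    rcases List.mem_cons.1 h1 with h | h
    · exact absurd h (by simp)
    · exact h
  have hspec := fun j : Fin m =>
    lastCrossAux_spec (A := A) ((W j).support.reverse.tail) v (hmemu j) (hchain j)
  set f : Fin m → R × R := fun j =>
    (lastCrossAux (R := R) (p := p) v ((W j).support.reverse.tail)).getD (u, u)
    with hf
  have hfspec : ∀ j : Fin m, (A i (f j).1 (f j).2 ∨ (f j).1 = (f j).2) ∧
      Sum.inl (f j).1 ∈ (W j).support ∧
      ((f j).2 = v ∧ (∃ l', (W j).support.reverse.tail = Sum.inl (f j).1 :: l') ∨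
        ((f j).2 ≠ v ∧ Sum.inr (i, (f j).2) ∈ (W j).support)) := by
    intro j
    obtain ⟨a, c, heq, harc, hmem, hc⟩ := hspec j
    have hfj : f j = (a, c) := by rw [hf]; simp only; rw [heq]; rfl
    rw [hfj]
    have hmem' : Sum.inl a ∈ (W j).support := by
      rw [← List.mem_reverse, hrev j]
      exact List.mem_cons_of_mem _ hmem
    refine ⟨harc, hmem', ?_⟩
    rcases hc with ⟨rfl, l', hl'⟩ | hmem2
    · exact Or.inl ⟨rfl, l', hl'⟩
    · by_cases hcv : c = v
      · subst hcv
        exfalso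
        have hnd : ((W j).support.reverse).Nodup := by
          simp only [List.nodup_reverse]
          exact (P j).2.support_nodup
        rw [hrev j] at hnd
        exact (List.nodup_cons.1 hnd).1 hmem2
      · refine Or.inr ⟨hcv, ?_⟩
        rw [← List.mem_reverse, hrev j]
        exact List.mem_cons_of_mem _ hmem2
  have hintl : ∀ j : Fin m, (f j).1 ≠ u → Sum.inl (f j).1 ∈ (W j).interior := by
    intro j hne
    exact ⟨(hfspec j).2.1, by simp [hne], by simp⟩
  have hintr : ∀ j : Fin m, (f j).2 ≠ v → Sum.inr (i, (f j).2) ∈ (W j).interior := by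
    intro j hne
    rcases (hfspec j).2.2 with ⟨hcv, -⟩ | ⟨-, hmem⟩
    · exact absurd hcv hne
    · exact ⟨hmem, by simp, by simp [hne]⟩
  have hdis' : ∀ (j j' : Fin m) (x : R ⊕ Fin p × R), x ∈ (W j).interior →
      x ∈ (W j').interior → j = j' := by
    intro j j' x hx hx'
    by_contra hne
    have h0 := hdis j j' hne
    rw [Set.eq_empty_iff_forall_notMem] at h0
    exact h0 x ⟨hx, hx'⟩
  refine ⟨f, fun j => (hfspec j).1, ?_, ?_, ?_⟩
  · intro j j' hne heq
    exact hdis' j j' _ (hintl j hne) (heq ▸ hintl j' (heq ▸ hne))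
  · intro j j' hne heq
    exact hdis' j j' _ (hintr j hne) (heq ▸ hintr j' (heq ▸ hne))
  · have hsup : ∀ j : Fin m, f j = (u, v) →
        (W j).support = [Sum.inl u, Sum.inr (i, v)] := by
      intro j hj
      rcases (hfspec j).2.2 with ⟨-, l', hl'⟩ | ⟨hcv, -⟩
      · rw [hj] at hl'
        have hrev2 : (W j).support.reverse = Sum.inr (i, v) :: Sum.inl u :: l' := by
          rw [hrev j, hl']
        have hh : (W j).support.head? = some (Sum.inl u) := by
          rw [Walk.support_eq_cons]
          rfl
        have hgl : (W j).support.reverse.getLast? = some (Sum.inl u) := by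
          rw [List.getLast?_reverse]
          exact hh
        cases l' with
        | nil =>
          rw [← List.reverse_reverse ((W j).support), hrev2]
          rfl
        | cons x l'' =>
          exfalso
          rw [hrev2, List.getLast?_cons_cons, List.getLast?_cons_cons] at hgl
          have hmem2 : Sum.inl u ∈ x :: l'' := mem_of_getLast?' hgl
          have hnd : ((W j).support.reverse).Nodup := by
            simp only [List.nodup_reverse]
            exact (P j).2.support_nodup
          rw [hrev2] at hnd
          exact (List.nodup_cons.1 (List.nodup_cons.1 hnd).2).1 hmem2
      · exact absurd (by rw [hj]) hcv
    intro j j' hj hj'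
    exact hinj (Subtype.ext (walk_support_pair _ (hsup j hj) _ (hsup j' hj')))

end Extract

section LowerMain
open List SimpleGraph

variable {R : Type*} {p : ℕ} {A : Fin p → R → R → Prop} {i : Fin p} {u v : R}

lemma units_lower [Fintype R] (huv : u ≠ v) {ι : Type*} [Fintype ι] (g : ι → R × R)
    (hg1 : ∀ j, A i (g j).1 (g j).2 ∨ (g j).1 = (g j).2)
    (hg2 : ∀ j j', (g j).1 ≠ u → (g j).1 = (g j').1 → j = j')
    (hg3 : ∀ j j', (g j).2 ≠ v → (g j).2 = (g j').2 → j = j')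
    (hg4 : ∀ j j', g j = (u, v) → g j' = (u, v) → j = j') :
    Fintype.card ι ≤ localKappa (combGraph p A) (Sum.inl u) (Sum.inr (i, v)) := by
  classical
  choose P hP using fun j : ι => exists_unitPath (A := A) (i := i) huv (hg1 j)
  have hmem : ∀ (j : ι) (x : R ⊕ Fin p × R),
      x ∈ (P j : (combGraph p A).Walk (Sum.inl u) (Sum.inr (i, v))).interior →
      (x = Sum.inl (g j).1 ∧ (g j).1 ≠ u) ∨ (x = Sum.inr (i, (g j).2) ∧ (g j).2 ≠ v) := by
    intro j x hx
    rw [hP j] at hx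
    rcases hx with hx | hx
    · by_cases h : (g j).1 = u
      · rw [if_pos h] at hx; exact absurd hx (Set.notMem_empty x)
      · rw [if_neg h] at hx; exact Or.inl ⟨hx, h⟩
    · by_cases h : (g j).2 = v
      · rw [if_pos h] at hx; exact absurd hx (Set.notMem_empty x)
      · rw [if_neg h] at hx; exact Or.inr ⟨hx, h⟩
  have hdis : ∀ j j' : ι, j ≠ j' →
      (P j : (combGraph p A).Walk (Sum.inl u) (Sum.inr (i, v))).interior ∩
      (P j' : (combGraph p A).Walk (Sum.inl u) (Sum.inr (i, v))).interior = ∅ := by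
    intro j j' hne
    rw [Set.eq_empty_iff_forall_notMem]
    rintro x ⟨hx1, hx2⟩
    rcases hmem j x hx1 with ⟨rfl, hne1⟩ | ⟨rfl, hne1⟩ <;>
      rcases hmem j' _ hx2 with ⟨he, hne2⟩ | ⟨he, hne2⟩
    · exact hne (hg2 j j' hne1 (Sum.inl.inj he))
    · exact absurd he (by simp)
    · exact absurd he (by simp)
    · exact hne (hg3 j j' hne1 ((Prod.ext_iff.1 (Sum.inr.inj he)).2))
  have hempty : ∀ j : ι,
      (P j : (combGraph p A).Walk (Sum.inl u) (Sum.inr (i, v))).interior = ∅ →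
      g j = (u, v) := by
    intro j h
    rw [hP j] at h
    by_cases h1 : (g j).1 = u <;> by_cases h2 : (g j).2 = v
    · exact Prod.ext h1 h2
    · exfalso
      rw [if_pos h1, if_neg h2, Set.empty_union] at h
      exact Set.notMem_empty _ (h ▸ Set.mem_singleton (Sum.inr (i, (g j).2)))
    · exfalso
      rw [if_neg h1, if_pos h2, Set.union_empty] at h
      exact Set.notMem_empty _ (h ▸ Set.mem_singleton (Sum.inl (g j).1))
    · exfalso
      rw [if_neg h1, if_neg h2] at h
      exact Set.notMem_empty _
        (h ▸ (Set.mem_union_left _ (Set.mem_singleton (Sum.inl (g j).1))))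
  have hinj : Function.Injective P := by
    intro j j' he
    by_contra hne
    have hd := hdis j j' hne
    have hcoe : (P j : (combGraph p A).Walk (Sum.inl u) (Sum.inr (i, v))) = P j' := by
      rw [he]
    rw [hcoe, Set.inter_self] at hd
    exact hne (hg4 j j' (hempty j (by rw [hcoe]; exact hd)) (hempty j' hd))
  refine le_localKappa ⟨fun k => P ((Fintype.equivFin ι).symm k),
    hinj.comp (Equiv.injective _), ?_⟩
  intro k k' hkk
  exact hdis _ _ (fun h => hkk ((Fintype.equivFin ι).symm.injective h))

end LowerMain

section DipathUnits
open List

variable {R : Type*}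

open Classical in
noncomputable def seqNext : List R → R → Option R
  | [], _ => none
  | [_], _ => none
  | x :: y :: t, w => if x = w then some y else seqNext (y :: t) w

lemma seqNext_tail : ∀ {l : List R} {w y : R}, seqNext l w = some y → y ∈ l.tail := by
  intro l
  induction l with
  | nil => intro w y h; simp [seqNext] at h
  | cons x rest ih =>
    intro w y h
    cases rest with
    | nil => simp [seqNext] at h
    | cons y' t =>
      rw [seqNext] at h
      split at h
      · injection h with h
        exact h ▸ List.mem_cons_self
      · exact List.mem_cons_of_mem _ (ih h)

lemma seqNext_rel {B : R → R → Prop} : ∀ {l : List R} {w y : R},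
    List.Chain' B l → seqNext l w = some y → B w y := by
  intro l
  induction l with
  | nil => intro w y _ h; simp [seqNext] at h
  | cons x rest ih =>
    intro w y hch h
    cases rest with
    | nil => simp [seqNext] at h
    | cons y' t =>
      rw [seqNext] at h
      obtain ⟨hxy, hch'⟩ := List.isChain_cons_cons.1 hch
      split at h
      · rename_i hxw
        injection h with h
        exact hxw ▸ h ▸ hxy
      · exact ih hch' h

lemma seqNext_some : ∀ {l : List R} (hne : l ≠ []) {w : R}, w ∈ l → w ≠ l.getLast hne →
    ∃ y, seqNext l w = some y := by
  intro l
  induction l with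
  | nil => intro h; exact absurd rfl h
  | cons x rest ih =>
    intro hne w hw hlast
    cases rest with
    | nil =>
      simp at hw
      simp [hw] at hlast
    | cons y' t =>
      by_cases hxw : x = w
      · exact ⟨y', by rw [seqNext, if_pos hxw]⟩
      · have hw' : w ∈ y' :: t := by
          rcases List.mem_cons.1 hw with h | h
          · exact absurd h.symm hxw
          · exact h
        have hlast' : w ≠ (y' :: t).getLast (List.cons_ne_nil _ _) := by
          rwa [List.getLast_cons (List.cons_ne_nil _ _)] at hlast
        obtain ⟨y, hy⟩ := ih (List.cons_ne_nil _ _) hw' hlast'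
        exact ⟨y, by rw [seqNext, if_neg hxw]; exact hy⟩

lemma seqNext_inj : ∀ {l : List R}, l.Nodup → ∀ {w w' y : R},
    seqNext l w = some y → seqNext l w' = some y → w = w' := by
  intro l
  induction l with
  | nil => intro _ w w' y h; simp [seqNext] at h
  | cons x rest ih =>
    intro hnd w w' y h h'
    cases rest with
    | nil => simp [seqNext] at h
    | cons y' t =>
      rw [seqNext] at h h'
      split at h <;> split at h'
      · rename_i h1 h2
        rw [← h1, ← h2]
      · rename_i h1 h2
        exfalso
        injection h with h
        have := seqNext_tail h'
        rw [← h] at this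
        exact (List.nodup_cons.1 (List.nodup_cons.1 hnd).2).1 this
      · rename_i h1 h2
        exfalso
        injection h' with h'
        have := seqNext_tail h
        rw [← h'] at this
        exact (List.nodup_cons.1 (List.nodup_cons.1 hnd).2).1 this
      · exact ih (List.nodup_cons.1 hnd).2 h h'

lemma seqNext_head {x y : R} {t : List R} : seqNext (x :: y :: t) x = some y := by
  rw [seqNext, if_pos rfl]

end DipathUnits

section LowerFinal
open List

variable {R : Type*} {p : ℕ} {A : Fin p → R → R → Prop} {i : Fin p} {u v : R}

lemma lower_bound [Fintype R] (huv : u ≠ v) :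
    diKappa (A i) u v + Fintype.card R ≤
      localKappa (combGraph p A) (Sum.inl u) (Sum.inr (i, v)) := by
  classical
  obtain ⟨D, hDinj, hDdis⟩ := diKappa_spec (A i) u v
  have hvne : ∀ α, (D α).verts ≠ [] := by
    intro α h
    have he := (D α).ends
    rw [h] at he
    simp at he
    exact huv he
  have hchain' : ∀ α, List.Chain' (A i) (u :: (D α).verts) := fun α => (D α).chain
  have hnd : ∀ α, (u :: (D α).verts).Nodup := fun α => (D α).nodup
  have huniq : ∀ (x : R) α α', x ∈ (D α).interior → x ∈ (D α').interior → α = α' := by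
    intro x α α' hx hx'
    by_contra hne
    have h0 := hDdis α α' hne
    rw [Set.eq_empty_iff_forall_notMem] at h0
    exact h0 x ⟨hx, hx'⟩
  have hgetLast? : ∀ α, (u :: (D α).verts).getLast? = some v := by
    intro α
    rw [List.getLast?_eq_getLast (List.cons_ne_nil _ _), (D α).ends]
  have hsplit : ∀ α, (D α).verts = (D α).verts.head (hvne α) :: (D α).verts.tail :=
    fun α => (List.cons_head_tail (hvne α)).symm
  have hfst_mem : ∀ α, (D α).verts.head (hvne α) ∈ (D α).verts := fun α => List.head_mem _
  have hfst_ne_u : ∀ α, (D α).verts.head (hvne α) ≠ u := by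
    intro α h
    have h9 := hfst_mem α
    rw [h] at h9
    exact (List.nodup_cons.1 (hnd α)).1 h9
  have hfst_arc : ∀ α, A i u ((D α).verts.head (hvne α)) := by
    intro α
    have hch : List.Chain' (A i) (u :: (D α).verts.head (hvne α) :: (D α).verts.tail) := by
      rw [← hsplit α]
      exact hchain' α
    exact (List.isChain_cons_cons.1 hch).1
  have hfst_v : ∀ α, (D α).verts.head (hvne α) = v → (D α).verts = [v] := by
    intro α h
    cases htl : (D α).verts.tail with
    | nil => rw [hsplit α, htl, h]
    | cons y t =>
      exfalso
      have hgl : (D α).verts.getLast? = some v := by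
        have h1 := hgetLast? α
        rw [show u :: (D α).verts = u :: (D α).verts.head (hvne α) :: (D α).verts.tail
          from by rw [← hsplit α]] at h1
        rw [List.getLast?_cons_cons] at h1
        rw [hsplit α]
        exact h1
      rw [hsplit α, htl, List.getLast?_cons_cons] at hgl
      have hvm : v ∈ (D α).verts.tail := htl ▸ mem_of_getLast?' hgl
      have hnd2 := (List.nodup_cons.1 (hnd α)).2
      rw [hsplit α] at hnd2
      exact (List.nodup_cons.1 hnd2).1 (by rw [h]; exact hvm)
  have hfst_int : ∀ α, (D α).verts.head (hvne α) ≠ v →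
      (D α).verts.head (hvne α) ∈ (D α).interior := by
    intro α h
    exact ⟨List.mem_cons_of_mem _ (hfst_mem α), hfst_ne_u α, h⟩
  -- next function on internal vertices
  set nx : R → R := fun w =>
    if h : ∃ α, w ∈ (D α).interior then
      ((seqNext (u :: (D h.choose).verts) w).getD v) else w
    with hnx
  have hnx_eq : ∀ (w : R) (h : ∃ α, w ∈ (D α).interior),
      seqNext (u :: (D h.choose).verts) w = some (nx w) := by
    intro w h
    obtain ⟨hm, hwu, hwv⟩ := h.choose_spec
    obtain ⟨y, hy⟩ := seqNext_some (List.cons_ne_nil _ _) hm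
      (by rw [(D h.choose).ends]; exact hwv)
    rw [hnx]
    simp only [dif_pos h]
    rw [hy]
    rfl
  have hnx_arc : ∀ (w : R) (h : ∃ α, w ∈ (D α).interior), A i w (nx w) :=
    fun w h => seqNext_rel (hchain' h.choose) (hnx_eq w h)
  have hnx_tail : ∀ (w : R) (h : ∃ α, w ∈ (D α).interior), nx w ∈ (D h.choose).verts :=
    fun w h => seqNext_tail (hnx_eq w h)
  have hnx_ne_u : ∀ (w : R) (h : ∃ α, w ∈ (D α).interior), nx w ≠ u := by
    intro w h heq
    have h9 := hnx_tail w h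
    rw [heq] at h9
    exact (List.nodup_cons.1 (hnd h.choose)).1 h9
  have hnx_int : ∀ (w : R) (h : ∃ α, w ∈ (D α).interior), nx w ≠ v →
      nx w ∈ (D h.choose).interior := by
    intro w h hne
    exact ⟨List.mem_cons_of_mem _ (hnx_tail w h), hnx_ne_u w h, hne⟩
  have hnx_id : ∀ w : R, ¬ (∃ α, w ∈ (D α).interior) → nx w = w := by
    intro w h
    rw [hnx]
    simp only [dif_neg h]
  -- the unit family
  set g : R ⊕ Fin (diKappa (A i) u v) → R × R := Sum.elim
    (fun w => if w = u then (u, u) else if w = v then (v, v) else (w, nx w))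
    (fun α => (u, (D α).verts.head (hvne α))) with hg
  have htail : ∀ w : R, (g (Sum.inl w)).1 = w := by
    intro w
    simp only [hg, Sum.elim_inl]
    split_ifs with h1 h2
    · rw [h1]
    · rw [h2]
    · rfl
  have htailr : ∀ α, (g (Sum.inr α)).1 = u := fun α => rfl
  have hg1 : ∀ j, A i (g j).1 (g j).2 ∨ (g j).1 = (g j).2 := by
    rintro (w | α)
    · simp only [hg, Sum.elim_inl]
      split_ifs with h1 h2
    
      · exact Or.inr rfl
      · exact Or.inr rfl
      · by_cases hin : ∃ α, w ∈ (D α).interior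
        · exact Or.inl (hnx_arc w hin)
        · exact Or.inr (hnx_id w hin).symm
    · exact Or.inl (hfst_arc α)
  have hg2 : ∀ j j', (g j).1 ≠ u → (g j).1 = (g j').1 → j = j' := by
    rintro (w | α) (w' | α') hne heq
    · rw [htail, htail] at heq
      rw [heq]
    · rw [htail, htailr] at heq
      exact absurd (by rw [htail]; exact heq) hne
    · exact absurd (htailr α) hne
    · exact absurd (htailr α) hne
  -- head certificate
  have hcert : ∀ (j : R ⊕ Fin (diKappa (A i) u v)), (g j).2 ≠ v →
      (∃ w, j = Sum.inl w ∧ (g j).2 = w ∧ ¬ (∃ α, w ∈ (D α).interior)) ∨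
      (∃ α, (g j).2 ∈ (D α).interior ∧
        seqNext (u :: (D α).verts) ((g j).1) = some ((g j).2) ∧
        ((j = Sum.inr α ∧ (g j).1 = u) ∨ (∃ w, j = Sum.inl w ∧ (g j).1 = w ∧ w ≠ u))) := by
    rintro (w | α) hnev
    · by_cases h1 : w = u
      · refine Or.inl ⟨w, rfl, ?_, ?_⟩
        · simp only [hg, Sum.elim_inl, if_pos h1]
          exact h1.symm
        · rintro ⟨α, -, hne, -⟩
          exact hne h1
      · by_cases h2 : w = v
        · exfalso
          apply hnev
          simp only [hg, Sum.elim_inl, if_neg h1, if_pos h2]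
        · have hval : (g (Sum.inl w)).2 = nx w := by
            simp only [hg, Sum.elim_inl, if_neg h1, if_neg h2]
          by_cases hin : ∃ α, w ∈ (D α).interior
          · refine Or.inr ⟨hin.choose, ?_, ?_, Or.inr ⟨w, rfl, htail w, h1⟩⟩
            · rw [hval]
              exact hnx_int w hin (by rw [← hval]; exact hnev)
            · rw [hval, htail]
              exact hnx_eq w hin
          · refine Or.inl ⟨w, rfl, ?_, hin⟩
            rw [hval]
            exact hnx_id w hin
    · refine Or.inr ⟨α, ?_, ?_, Or.inl ⟨rfl, rfl⟩⟩
      · exact hfst_int α (by exact hnev)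
      · show seqNext (u :: (D α).verts) u = some ((D α).verts.head (hvne α))
        rw [show u :: (D α).verts = u :: (D α).verts.head (hvne α) :: (D α).verts.tail
          from by rw [← hsplit α]]
        exact seqNext_head
  have hg3 : ∀ j j', (g j).2 ≠ v → (g j).2 = (g j').2 → j = j' := by
    intro j j' hne heq
    have hne' : (g j').2 ≠ v := by rw [← heq]; exact hne
    rcases hcert j hne with ⟨w, rfl, hw, hni⟩ | ⟨α, hintm, hseq, hsrc⟩ <;>
      rcases hcert j' hne' with ⟨w', rfl, hw', hni'⟩ | ⟨α', hintm', hseq', hsrc'⟩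
    · rw [hw, hw'] at heq
      rw [heq]
    · exfalso
      apply hni
      have h9 : w = (g j').2 := by rw [← hw, heq]
      refine ⟨α', ?_⟩
      rw [h9]
      exact hintm'
    · exfalso
      apply hni'
      have h9 : w' = (g j).2 := by rw [← hw', heq]
      refine ⟨α, ?_⟩
      rw [h9]
      exact hintm
    · have h9 : (g j).2 ∈ (D α').interior := by rw [heq]; exact hintm'
      have hαα : α = α' := huniq _ α α' hintm h9
      rw [← hαα] at hseq' hintm'
      rw [← heq] at hseq'
      have htl : (g j).1 = (g j').1 := seqNext_inj (hnd α) hseq hseq'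
      rcases hsrc with ⟨hj, hju⟩ | ⟨w, hj, hjw, hwu⟩ <;>
        rcases hsrc' with ⟨hj', hju'⟩ | ⟨w', hj', hjw', hwu'⟩
      · rw [hj, hj', ← hαα]
      · exfalso
        apply hwu'
        rw [← hjw', ← htl, hju]
      · exfalso
        apply hwu
        rw [← hjw, htl, hju']
      · rw [hj, hj']
        rw [hjw, hjw'] at htl
        rw [htl]
  have hg4 : ∀ j j', g j = (u, v) → g j' = (u, v) → j = j' := by
    have key : ∀ j, g j = (u, v) → ∃ α, j = Sum.inr α ∧ (D α).verts = [v] := by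
      rintro (w | α) hj
      · exfalso
        have := htail w
        rw [hj] at this
        simp only at this
        -- w = u
        rw [← this] at hj
        simp only [hg, Sum.elim_inl, if_pos rfl] at hj
        exact huv (Prod.ext_iff.1 hj).2
      · refine ⟨α, rfl, ?_⟩
        apply hfst_v
        have : (g (Sum.inr α)).2 = v := by rw [hj]
        exact this
    intro j j' hj hj'
    obtain ⟨α, rfl, hα⟩ := key j hj
    obtain ⟨α', rfl, hα'⟩ := key j' hj'
    have : D α = D α' := DiPath.ext' (by rw [hα, hα'])
    rw [hDinj this]
  have hcard := units_lower (A := A) (i := i) huv g hg1 hg2 hg3 hg4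
  rw [Fintype.card_sum, Fintype.card_fin] at hcard
  omega

end LowerFinal


/-- in the combined graph, for each gadget `i` and distinct `u, v ∈ R`,
the maximum number of internally disjoint paths between `u` and the copy `vᵢ`
equals `κ_{Dᵢ}(u, v) + k`. -/
theorem stmt9 {R : Type*} [Fintype R] (k p : ℕ) (hk : 1 ≤ k) (hp : 1 ≤ p)
    (hcard : Fintype.card R = k) (A : Fin p → R → R → Prop)
    (hA : ∀ i, DiAcyclic (A i)) (i : Fin p) (u v : R) (huv : u ≠ v) :
    localKappa (combGraph p A) (Sum.inl u) (Sum.inr (i, v)) = diKappa (A i) u v + k := by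
  have hupper : localKappa (combGraph p A) (Sum.inl u) (Sum.inr (i, v)) ≤
      diKappa (A i) u v + k := by
    refine localKappa_le ?_
    intro m hm
    obtain ⟨P, hinj, hdis⟩ := hm
    obtain ⟨f, h1, h2, h3, h4⟩ := paths_to_units huv P hinj hdis
    have hub := units_upper (hA i) huv h1 h2 h3 h4
    rw [hcard] at hub
    exact hub
  have hlower := lower_bound (A := A) (i := i) huv
  rw [hcard] at hlower
  exact le_antisymm hupper hlower
end Aux
end

section
/- For every k ≥ 1 and 1 ≤ p ≤ 2^{⌊k/2⌋·⌈k/2⌉}, there exists a k-connected graph G on n = k(p+1) vertices such that the number of distinct graphs obtainable by the construction (varying the p DAGs over DAGs with distinct reachability relations) with pairwise distinct answers to the family of k-connectivity queries 'κ_G(s,t) > k?' is at least 2^{p·⌊k/2⌋·⌈k/2⌉}. Consequently, any k-connectivity oracle for k-connected graphs on n vertices must use at least p·⌊k/2⌋·⌈k/2⌉ bits. -/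
open SimpleGraph

namespace KOracle
variable {R : Type*} {p : ℕ} {A : Fin p → R → R → Prop}

@[simp] lemma comb_adj_ll {u v : R} : (combGraph p A).Adj (.inl u) (.inl v) ↔ u ≠ v := Iff.rfl
@[simp] lemma comb_adj_lr {u v : R} {i : Fin p} :
    (combGraph p A).Adj (.inl u) (.inr (i, v)) ↔ A i u v ∨ u = v := Iff.rfl
@[simp] lemma comb_adj_rl {u v : R} {i : Fin p} :
    (combGraph p A).Adj (.inr (i, v)) (.inl u) ↔ A i u v ∨ u = v := Iff.rfl
@[simp] lemma comb_adj_rr {u v : R} {i j : Fin p} :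
    (combGraph p A).Adj (.inr (i, u)) (.inr (j, v)) ↔ i = j ∧ u ≠ v := Iff.rfl

variable {V : Type*} {G : SimpleGraph V}

def kSet (G : SimpleGraph V) (u v : V) : Set ℕ :=
  {m | ∃ P : Fin m → G.Path u v, Function.Injective P ∧
    ∀ i j, i ≠ j → (P i : G.Walk u v).interior ∩ (P j : G.Walk u v).interior = ∅}

lemma localKappa_eq (u v : V) : localKappa G u v = sSup (kSet G u v) := rfl

lemma zero_mem_kSet (u v : V) : 0 ∈ kSet G u v :=
  ⟨fun i => i.elim0, fun i => i.elim0, fun i => i.elim0⟩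

lemma walk_eq_single {u v : V} (hne : u ≠ v) (w : G.Walk u v) (hw : w.IsPath)
    (h : w.interior = ∅) : ∃ h' : G.Adj u v, w = Walk.cons h' Walk.nil := by
  cases w with
  | nil => exact absurd rfl hne
  | @cons _ x _ h' w' =>
    have hx : x = v := by
      by_contra hxv
      have hmem : x ∈ (Walk.cons h' w').interior :=
        ⟨by simp, fun he => (G.ne_of_adj h') he.symm, hxv⟩
      rw [h] at hmem; exact hmem
    subst hx
    have hw' : w' = Walk.nil := Walk.isPath_iff_eq_nil.mp hw.of_cons
    exact ⟨h', by rw [hw']⟩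

lemma path_eq_of_interior_empty {u v : V} (P Q : G.Path u v)
    (hP : (P : G.Walk u v).interior = ∅) (hQ : (Q : G.Walk u v).interior = ∅) : P = Q := by
  by_cases huv : u = v
  · subst huv; rw [Path.loop_eq P, Path.loop_eq Q]
  · obtain ⟨h1, e1⟩ := walk_eq_single huv _ P.2 hP
    obtain ⟨h2, e2⟩ := walk_eq_single huv _ Q.2 hQ
    exact Subtype.ext (e1.trans e2.symm)

lemma mem_kSet_le [Fintype V] {u v : V} {m : ℕ} (h : m ∈ kSet G u v) :
    m ≤ Fintype.card V + 1 := by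
  classical
  obtain ⟨P, hinj, hdisj⟩ := h
  have key : Function.Injective (fun i : Fin m =>
      if h : ((P i : G.Walk u v).interior).Nonempty then (some h.choose : Option V) else none) := by
    intro i j hij
    simp only at hij
    by_cases h1 : ((P i : G.Walk u v).interior).Nonempty
    · by_cases h2 : ((P j : G.Walk u v).interior).Nonempty
      · rw [dif_pos h1, dif_pos h2, Option.some_inj] at hij
        by_contra hne
        have hx : h1.choose ∈ (P i : G.Walk u v).interior ∩ (P j : G.Walk u v).interior :=
          ⟨h1.choose_spec, hij ▸ h2.choose_spec⟩
        rw [hdisj i j hne] at hx; exact hx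
      · rw [dif_pos h1, dif_neg h2] at hij; exact absurd hij (Option.some_ne_none _)
    · by_cases h2 : ((P j : G.Walk u v).interior).Nonempty
      · rw [dif_neg h1, dif_pos h2] at hij; exact absurd hij.symm (Option.some_ne_none _)
      · exact hinj (path_eq_of_interior_empty _ _ (Set.not_nonempty_iff_eq_empty.mp h1)
          (Set.not_nonempty_iff_eq_empty.mp h2))
  have := Fintype.card_le_of_injective _ key
  simpa using this

lemma bddAbove_kSet [Fintype V] (u v : V) : BddAbove (kSet G u v) :=
  ⟨Fintype.card V + 1, fun _ hm => mem_kSet_le hm⟩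

lemma le_localKappa [Fintype V] {u v : V} {m : ℕ} (h : m ∈ kSet G u v) :
    m ≤ localKappa G u v :=
  le_csSup (bddAbove_kSet u v) h

lemma localKappa_le [Fintype V] {u v : V} {n : ℕ} (h : ∀ m ∈ kSet G u v, m ≤ n) :
    localKappa G u v ≤ n :=
  csSup_le ⟨0, zero_mem_kSet u v⟩ h

lemma localKappa_le_card_cut [Fintype V] {s t : V} (C : Finset V) (hs : s ∉ C) (ht : t ∉ C)
    (hcut : ∀ w : G.Walk s t, ∃ x ∈ C, x ∈ w.support) :
    localKappa G s t ≤ C.card := by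
  classical
  apply localKappa_le
  rintro m ⟨P, hinj, hdisj⟩
  choose x hxC hxsup using fun i => hcut (P i : G.Walk s t)
  have hint : ∀ i, x i ∈ (P i : G.Walk s t).interior := fun i =>
    ⟨hxsup i, fun h => hs (h ▸ hxC i), fun h => ht (h ▸ hxC i)⟩
  have hfinj : Function.Injective (fun i => (⟨x i, hxC i⟩ : {y // y ∈ C})) := by
    intro i j hij
    by_contra hne
    have hx : x i ∈ (P i : G.Walk s t).interior ∩ (P j : G.Walk s t).interior := by
      refine ⟨hint i, ?_⟩
      have : x i = x j := by simpa using hij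
      exact this ▸ hint j
    rw [hdisj i j hne] at hx; exact hx
  have := Fintype.card_le_of_injective _ hfinj
  simpa using this

lemma comb_isKConnected {k p : ℕ} (hk : 1 ≤ k) (hp : 1 ≤ p)
    (A : Fin p → Fin k → Fin k → Prop) : IsKConnected (combGraph p A) k := by
  classical
  constructor
  · simp only [Fintype.card_sum, Fintype.card_prod, Fintype.card_fin]
    have : 1 * 1 ≤ p * k := Nat.mul_le_mul hp hk
    omega
  · intro C hC
    set G := combGraph p A with hG
    -- a left vertex outside C
    have hw0 : ∃ w0 : Fin k, Sum.inl w0 ∉ C := by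
      by_contra h
      push_neg at h
      have hinj : Function.Injective (fun w : Fin k => (⟨Sum.inl w, h w⟩ : {y // y ∈ C})) := by
        intro a b hab
        simpa using hab
      have := Fintype.card_le_of_injective _ hinj
      simp only [Fintype.card_coe, Fintype.card_fin] at this
      omega
    obtain ⟨w0, hw0⟩ := hw0
    -- for each i, a matched pair outside C
    have hstar : ∀ i : Fin p, ∃ w : Fin k, Sum.inl w ∉ C ∧ Sum.inr (i, w) ∉ C := by
      intro i
      by_contra h
      push_neg at h
      have hinj : Function.Injective (fun w : Fin k =>
          (if hw : Sum.inl w ∈ C then ⟨Sum.inl w, hw⟩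
           else ⟨Sum.inr (i, w), h w hw⟩ : {y // y ∈ C})) := by
        intro a b hab
        by_cases ha : Sum.inl a ∈ C <;> by_cases hb : Sum.inl b ∈ C <;>
          simp only [dif_pos, dif_neg, ha, hb, Subtype.mk_eq_mk] at hab <;>
          simp_all
      have := Fintype.card_le_of_injective _ hinj
      simp only [Fintype.card_coe, Fintype.card_fin] at this
      omega
    choose ws hws1 hws2 using hstar
    set s : Set (Fin k ⊕ Fin p × Fin k) := (↑C : Set _)ᶜ with hs
    have hmem : ∀ x, x ∉ C → x ∈ s := fun x hx => by simp [hs, hx]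
    have hub : ∀ z : s, (G.induce s).Reachable z ⟨Sum.inl w0, hmem _ hw0⟩ := by
      rintro ⟨(w | ⟨i, w⟩), hz⟩
      · by_cases hww : w = w0
        · subst hww; exact Reachable.refl _
        · exact Adj.reachable (by simp [comap_adj, hG, hww])
      · have r2 : (G.induce s).Reachable ⟨Sum.inr (i, ws i), hmem _ (hws2 i)⟩
            ⟨Sum.inl (ws i), hmem _ (hws1 i)⟩ :=
          Adj.reachable (by simp [comap_adj, hG])
        have r3 : (G.induce s).Reachable ⟨Sum.inl (ws i), hmem _ (hws1 i)⟩
            ⟨Sum.inl w0, hmem _ hw0⟩ := by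
          by_cases hww : ws i = w0
          · exact hww ▸ Reachable.refl _
          · exact Adj.reachable (by simp [comap_adj, hG, hww])
        have r1 : (G.induce s).Reachable ⟨Sum.inr (i, w), hz⟩
            ⟨Sum.inr (i, ws i), hmem _ (hws2 i)⟩ := by
          by_cases hww : w = ws i
          · subst hww; exact Reachable.refl _
          · exact Adj.reachable (by simp [comap_adj, hG, hww])
        exact (r1.trans r2).trans r3
    haveI : Nonempty s := ⟨⟨Sum.inl w0, hmem _ hw0⟩⟩
    exact ⟨fun a b => (hub a).trans (hub b).symm⟩

lemma kplus_mem_kSet {k p : ℕ} {A : Fin p → Fin k → Fin k → Prop} {i : Fin p} {u v : Fin k}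
    (hA : A i u v) (huv : u ≠ v) :
    k + 1 ∈ kSet (combGraph p A) (.inl u) (.inr (i, v)) := by
  classical
  set G := combGraph p A with hG
  set s0 : Fin k ⊕ Fin p × Fin k := Sum.inl u with hs0
  set t0 : Fin k ⊕ Fin p × Fin k := Sum.inr (i, v) with ht0
  have walk0 : G.Walk s0 t0 := Walk.cons (comb_adj_lr.mpr (Or.inl hA)) Walk.nil
  have hpath0 : (Walk.cons (comb_adj_lr.mpr (Or.inl hA) : G.Adj s0 t0) Walk.nil).IsPath := by
    simp [Walk.isPath_def, hs0, ht0]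
  let Q : Fin k → G.Walk s0 t0 := fun w =>
    if hwu : w = u then
      Walk.cons (comb_adj_lr.mpr (Or.inr rfl))
        (Walk.cons (comb_adj_rr.mpr ⟨rfl, huv⟩) Walk.nil)
    else if hwv : w = v then
      Walk.cons (comb_adj_ll.mpr huv)
        (Walk.cons (comb_adj_lr.mpr (Or.inr rfl)) Walk.nil)
    else
      Walk.cons (comb_adj_ll.mpr (Ne.symm hwu))
        (Walk.cons (comb_adj_lr.mpr (Or.inr rfl))
          (Walk.cons (comb_adj_rr.mpr ⟨rfl, hwv⟩) Walk.nil))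
  have hQpath : ∀ w, (Q w).IsPath := by
    intro w
    by_cases hwu : w = u
    · simp [Q, hwu, Walk.isPath_def, hs0, ht0, huv]
    · by_cases hwv : w = v
      · simp [Q, hwu, hwv, Walk.isPath_def, hs0, ht0, huv, Ne.symm huv]
      · simp [Q, hwu, hwv, Walk.isPath_def, hs0, ht0, Ne.symm hwu, hwv]
  have hQsub : ∀ w, (Q w).interior ⊆ {Sum.inl w, Sum.inr (i, w)} := by
    intro w x hx
    obtain ⟨hsup, hxu, hxv⟩ := hx
    by_cases hwu : w = u
    · simp only [Q, hwu, dif_pos] at hsup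
      simp only [Walk.support_cons, Walk.support_nil, List.mem_cons] at hsup
      rcases hsup with h | h | h | h <;> simp_all [hs0, ht0, hwu]
    · by_cases hwv : w = v
      · simp only [Q] at hsup
        rw [dif_neg hwu, dif_pos hwv] at hsup
        simp only [Walk.support_cons, Walk.support_nil, List.mem_cons] at hsup
        rcases hsup with h | h | h | h <;> simp_all [hs0, ht0, hwv]
      · simp only [Q] at hsup
        rw [dif_neg hwu, dif_neg hwv] at hsup
        simp only [Walk.support_cons, Walk.support_nil, List.mem_cons] at hsup
        rcases hsup with h | h | h | h | h <;> simp_all [hs0, ht0]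
  have hQwit : ∀ w, (if w = v then Sum.inl w else Sum.inr (i, w)) ∈ (Q w).interior := by
    intro w
    by_cases hwv : w = v
    · subst hwv
      have hwu : w ≠ u := Ne.symm huv
      refine ⟨?_, ?_, ?_⟩ <;> simp [Q, hwu, hs0, ht0, Ne.symm huv]
    · by_cases hwu : w = u
      · subst hwu
        refine ⟨?_, ?_, ?_⟩ <;> simp [Q, hwv, hs0, ht0, huv]
      · refine ⟨?_, ?_, ?_⟩ <;> simp [Q, hwu, hwv, hs0, ht0]
  let P : Option (Fin k) → G.Path s0 t0 := fun o =>
    Option.rec ⟨_, hpath0⟩ (fun w => ⟨Q w, hQpath w⟩) o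
  have hint0 : (P none).1.interior = ∅ := by
    ext x
    simp only [P, Walk.interior, Set.mem_setOf_eq, Walk.support_cons, Walk.support_nil,
      List.mem_cons, Set.mem_empty_iff_false, iff_false, not_and, List.not_mem_nil, or_false]
    rintro (h | h) h1 h2 <;> simp_all
  have hdisj : ∀ o o' : Option (Fin k), o ≠ o' →
      (P o).1.interior ∩ (P o').1.interior = ∅ := by
    rintro (_ | w) (_ | w') hne
    · exact absurd rfl hne
    · rw [hint0]; exact Set.empty_inter _
    · rw [Set.inter_comm, hint0]; exact Set.empty_inter _
    · have hww : w ≠ w' := fun h => hne (by rw [h])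
      apply Set.eq_empty_iff_forall_notMem.mpr
      rintro x ⟨hx1, hx2⟩
      have h1 := hQsub w hx1
      have h2 := hQsub w' hx2
      simp only [Set.mem_insert_iff, Set.mem_singleton_iff] at h1 h2
      rcases h1 with h1 | h1 <;> rcases h2 with h2 | h2 <;> rw [h1] at h2 <;> simp_all
  have hPinj : Function.Injective P := by
    intro o o' h
    by_contra hne
    have hd := hdisj o o' hne
    rw [h, Set.inter_self] at hd
    rcases o' with _ | w'
    · rcases o with _ | w
      · exact hne rfl
      · have he : (P (some w)).1.interior = ∅ := by
          rw [show P (some w) = P none from h]; exact hint0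
        have hw := hQwit w
        rw [show (Q w).interior = (P (some w)).1.interior from rfl, he] at hw
        exact hw
    · have hw := hQwit w'
      rw [show (Q w').interior = (P (some w')).1.interior from rfl, hd] at hw
      exact hw
  refine ⟨fun n => P (finSuccEquiv k n), ?_, ?_⟩
  · intro a b hab
    exact (finSuccEquiv k).injective (hPinj hab)
  · intro a b hab
    exact hdisj _ _ (fun hh => hab ((finSuccEquiv k).injective hh))

lemma upper {k p : ℕ} {A : Fin p → Fin k → Fin k → Prop} {i : Fin p} {u v : Fin k}
    (h2 : ∀ w w', A i u w → ¬ A i w w') (hv1 : ¬ A i u v) (huv : u ≠ v) :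
    localKappa (combGraph p A) (.inl u) (.inr (i, v)) ≤ k := by
  classical
  set G := combGraph p A with hG
  set Rset : Finset (Fin k) := insert u (Finset.univ.filter (fun w => A i u w)) with hR
  have hmemR : ∀ w, w ∈ Rset ↔ (w = u ∨ A i u w) := by intro w; simp [hR]
  have huR : u ∈ Rset := (hmemR u).mpr (Or.inl rfl)
  have hvR : v ∉ Rset := by
    rw [hmemR]
    rintro (rfl | h)
    · exact huv rfl
    · exact hv1 h
  have hclosed : ∀ w ∈ Rset, ∀ w', (A i w w' ∨ w = w') → w' ∈ Rset := by
    intro w hw w' hh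
    rcases (hmemR w).mp hw with rfl | hA
    · rcases hh with h | rfl
      · exact (hmemR w').mpr (Or.inr h)
      · exact hw
    · rcases hh with h | rfl
      · exact absurd h (h2 _ _ hA)
      · exact hw
  set C : Finset (Fin k ⊕ Fin p × Fin k) :=
    (Rsetᶜ).map ⟨Sum.inl, Sum.inl_injective⟩ ∪
      Rset.map ⟨fun w => Sum.inr (i, w), fun a b h => by simpa using h⟩ with hC
  have hCl : ∀ w : Fin k, Sum.inl w ∈ C ↔ w ∉ Rset := by intro w; simp [hC]
  have hCr : ∀ (j : Fin p) (w : Fin k), Sum.inr (j, w) ∈ C ↔ (j = i ∧ w ∈ Rset) := by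
    intro j w
    simp only [hC, Finset.mem_union, Finset.mem_map, Function.Embedding.coeFn_mk]
    constructor
    · rintro (⟨a, _, h⟩ | ⟨a, ha, h⟩)
      · exact absurd h (by simp)
      · have h : i = j ∧ a = w := by
          have h' : Sum.inr (i, a) = (Sum.inr (j, w) : Fin k ⊕ Fin p × Fin k) := h
          simpa using h'
        exact ⟨h.1.symm, h.2 ▸ ha⟩
    · rintro ⟨rfl, hw⟩
      exact Or.inr ⟨w, hw, rfl⟩
  have hcard : C.card = k := by
    rw [hC, Finset.card_union_of_disjoint, Finset.card_map, Finset.card_map]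
    · have hle : Rset.card ≤ k := by simpa using Finset.card_le_univ Rset
      simp only [Finset.card_compl, Fintype.card_fin]
      omega
    · rw [Finset.disjoint_left]
      rintro x hx1 hx2
      simp only [Finset.mem_map, Function.Embedding.coeFn_mk] at hx1 hx2
      obtain ⟨a, _, rfl⟩ := hx1
      obtain ⟨b, _, hb⟩ := hx2
      exact absurd hb (by simp)
  have hsC : Sum.inl u ∉ C := by rw [hCl]; simp [huR]
  have htC : Sum.inr (i, v) ∉ C := by rw [hCr]; simp [hvR]
  have hcut : ∀ w : G.Walk (Sum.inl u) (Sum.inr (i, v)), ∃ x ∈ C, x ∈ w.support := by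
    intro W
    by_contra hcon
    push_neg at hcon
    have aux : ∀ (z z2 : Fin k ⊕ Fin p × Fin k) (W' : G.Walk z z2),
        z2 = Sum.inr (i, v) → (∀ x ∈ W'.support, x ∉ C) →
        (∀ w, z = Sum.inl w → w ∈ Rset) → (∀ j w, z = Sum.inr (j, w) → j ≠ i) → False := by
      intro z z2 W'
      induction W' with
      | nil =>
        intro heq _ _ hz2
        exact hz2 i v heq rfl
      | @cons a b _ h W ih =>
        intro heq hsup hz1 hz2
        have hbC : b ∉ C := hsup b (by simp)
        have hnext : (∀ w, b = Sum.inl w → w ∈ Rset) ∧ (∀ j w, b = Sum.inr (j, w) → j ≠ i) := by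
          rcases a with w | ⟨j, w⟩
          · have hw : w ∈ Rset := hz1 w rfl
            rcases b with w' | ⟨j', w'⟩
            · refine ⟨fun w'' hw'' => ?_, by simp⟩
              rw [hw''] at hbC
              rw [hCl] at hbC
              exact not_not.mp hbC
            · refine ⟨by simp, fun j'' w'' hww => ?_⟩
              rw [hww] at hbC h
              intro hji
              rw [hji] at hbC h
              have hadj : A i w w'' ∨ w = w'' := comb_adj_lr.mp h
              exact hbC ((hCr i w'').mpr ⟨rfl, hclosed w hw w'' hadj⟩)
          · have hj : j ≠ i := hz2 j w rfl
            rcases b with w' | ⟨j', w'⟩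
            · refine ⟨fun w'' hw'' => ?_, by simp⟩
              rw [hw''] at hbC
              rw [hCl] at hbC
              exact not_not.mp hbC
            · refine ⟨by simp, fun j'' w'' hww => ?_⟩
              rw [hww] at h
              have hadj : j = j'' ∧ w ≠ w'' := comb_adj_rr.mp h
              rw [← hadj.1]
              exact hj
        exact ih heq (fun x hx => hsup x (by simp [hx])) hnext.1 hnext.2
    exact aux _ _ W rfl (fun x hx hxC => hcon x hxC hx) (fun w hw => by cases hw; exact huR)
      (fun j w hw => by cases hw)
  have := localKappa_le_card_cut C hsC htC hcut
  rwa [hcard] at this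


def emb1 (k : ℕ) (x : Fin (k / 2)) : Fin k :=
  ⟨x.1, lt_of_lt_of_le x.2 (Nat.div_le_self k 2)⟩

def emb2 (k : ℕ) (y : Fin ((k + 1) / 2)) : Fin k :=
  ⟨k / 2 + y.1, by have := y.2; omega⟩

def Arel (k p : ℕ) (t : Fin p → Fin (k / 2) → Fin ((k + 1) / 2) → Bool) :
    Fin p → Fin k → Fin k → Prop :=
  fun i u v => ∃ x y, u = emb1 k x ∧ v = emb2 k y ∧ t i x y = true

lemma emb_ne {k : ℕ} (x : Fin (k / 2)) (y : Fin ((k + 1) / 2)) : emb1 k x ≠ emb2 k y := by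
  intro h
  have := congrArg Fin.val h
  simp only [emb1, emb2] at this
  have := x.2
  omega

lemma Arel_iff {k p : ℕ} (t : Fin p → Fin (k / 2) → Fin ((k + 1) / 2) → Bool)
    (i : Fin p) (x : Fin (k / 2)) (y : Fin ((k + 1) / 2)) :
    Arel k p t i (emb1 k x) (emb2 k y) ↔ t i x y = true := by
  constructor
  · rintro ⟨x', y', hx, hy, h⟩
    have hx' : x' = x := by
      have := congrArg Fin.val hx
      simp only [emb1] at this
      exact Fin.ext this.symm
    have hy' : y' = y := by
      have := congrArg Fin.val hy
      simp only [emb2] at this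
      exact Fin.ext (by omega)
    rw [← hx', ← hy']; exact h
  · intro h; exact ⟨x, y, rfl, rfl, h⟩

lemma Arel_no2step {k p : ℕ} (t : Fin p → Fin (k / 2) → Fin ((k + 1) / 2) → Bool)
    (i : Fin p) (u : Fin k) :
    ∀ w w', Arel k p t i u w → ¬ Arel k p t i w w' := by
  rintro w w' ⟨x, y, _, hw, _⟩ ⟨x', y', hw', _, _⟩
  rw [hw] at hw'
  have := congrArg Fin.val hw'
  simp only [emb1, emb2] at this
  have := x'.2
  omega

lemma key {k p : ℕ} (t : Fin p → Fin (k / 2) → Fin ((k + 1) / 2) → Bool)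
    (i : Fin p) (x : Fin (k / 2)) (y : Fin ((k + 1) / 2)) :
    (k < localKappa (combGraph p (Arel k p t)) (.inl (emb1 k x)) (.inr (i, emb2 k y))) ↔
      t i x y = true := by
  constructor
  · intro h
    by_contra hf
    have hv1 : ¬ Arel k p t i (emb1 k x) (emb2 k y) := fun hA => hf ((Arel_iff t i x y).mp hA)
    have := upper (Arel_no2step t i (emb1 k x)) hv1 (emb_ne x y)
    omega
  · intro h
    have hm := kplus_mem_kSet ((Arel_iff t i x y).mpr h) (emb_ne x y)
    have := le_localKappa hm
    omega

end KOracle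

/-- for `k ≥ 1` and `1 ≤ p ≤ 2 ^ (⌊k/2⌋⌈k/2⌉)` there is a family of
at least `2 ^ (p⌊k/2⌋⌈k/2⌉)` `k`-connected graphs on `n = k(p+1)` vertices with
pairwise distinct answers to the `k`-connectivity queries, so any `k`-connectivity
oracle for `k`-connected graphs on `n` vertices needs at least `p⌊k/2⌋⌈k/2⌉` bits. -/
theorem stmt10 (k p : ℕ) (hk : 1 ≤ k) (hp : 1 ≤ p) (hp' : p ≤ 2 ^ (k / 2 * ((k + 1) / 2))) :
    Fintype.card (Fin k ⊕ Fin p × Fin k) = k * (p + 1) ∧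
    (∃ F : Set (SimpleGraph (Fin k ⊕ Fin p × Fin k)),
        (∀ G ∈ F, IsKConnected G k) ∧
        Set.InjOn (fun G => fun s t : Fin k ⊕ Fin p × Fin k => k < localKappa G s t) F ∧
        2 ^ (p * (k / 2 * ((k + 1) / 2))) ≤ Nat.card F) ∧
    ∀ b : ℕ, b < p * (k / 2 * ((k + 1) / 2)) →
      ∀ (e : SimpleGraph (Fin k ⊕ Fin p × Fin k) → (Fin b → Bool))
        (d : (Fin b → Bool) → (Fin k ⊕ Fin p × Fin k) → (Fin k ⊕ Fin p × Fin k) → Bool),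
        ¬ ∀ G : SimpleGraph (Fin k ⊕ Fin p × Fin k), IsKConnected G k →
            ∀ s t, (d (e G) s t = true ↔ k < localKappa G s t) := by
  classical
  have hcardV : Fintype.card (Fin k ⊕ Fin p × Fin k) = k * (p + 1) := by
    simp only [Fintype.card_sum, Fintype.card_prod, Fintype.card_fin]
    ring
  have hcardI : Fintype.card (Fin p → Fin (k / 2) → Fin ((k + 1) / 2) → Bool) =
      2 ^ (p * (k / 2 * ((k + 1) / 2))) := by
    simp only [Fintype.card_fun, Fintype.card_bool, Fintype.card_fin]
    rw [← pow_mul, ← pow_mul]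
    congr 1
    ring
  set g : (Fin p → Fin (k / 2) → Fin ((k + 1) / 2) → Bool) →
      SimpleGraph (Fin k ⊕ Fin p × Fin k) := fun t => combGraph p (KOracle.Arel k p t) with hg
  have hginjAns : ∀ t1 t2, ((fun s t' => k < localKappa (g t1) s t') =
      (fun s t' : Fin k ⊕ Fin p × Fin k => k < localKappa (g t2) s t')) → t1 = t2 := by
    intro t1 t2 h
    funext i x y
    have h1 := KOracle.key t1 i x y
    have h2 := KOracle.key t2 i x y
    have he : (k < localKappa (g t1) (.inl (KOracle.emb1 k x)) (.inr (i, KOracle.emb2 k y))) =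
        (k < localKappa (g t2) (.inl (KOracle.emb1 k x)) (.inr (i, KOracle.emb2 k y))) :=
      congrFun (congrFun h _) _
    rw [iff_of_eq he] at h1
    rw [h1] at h2
    cases hb1 : t1 i x y <;> cases hb2 : t2 i x y <;> simp_all
  have hginj : Function.Injective g := fun t1 t2 h => hginjAns t1 t2 (by rw [h])
  have hB : ∃ F : Set (SimpleGraph (Fin k ⊕ Fin p × Fin k)),
      (∀ G ∈ F, IsKConnected G k) ∧
      Set.InjOn (fun G => fun s t : Fin k ⊕ Fin p × Fin k => k < localKappa G s t) F ∧
      2 ^ (p * (k / 2 * ((k + 1) / 2))) ≤ Nat.card F := by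
    refine ⟨Set.range g, ?_, ?_, ?_⟩
    · rintro G ⟨t, rfl⟩
      exact KOracle.comb_isKConnected hk hp _
    · rintro G1 ⟨t1, rfl⟩ G2 ⟨t2, rfl⟩ h
      exact congrArg g (hginjAns t1 t2 h)
    · rw [Nat.card_range_of_injective hginj, Nat.card_eq_fintype_card, hcardI]
  refine ⟨hcardV, hB, ?_⟩
  intro b hb e d hall
  obtain ⟨F, hFconn, hFinj, hFcard⟩ := hB
  have hinj2 : Function.Injective (fun G : F => e G.1) := by
    intro G1 G2 h
    simp only at h
    apply Subtype.ext
    apply hFinj G1.2 G2.2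
    funext s t'
    have h1 := hall G1.1 (hFconn _ G1.2) s t'
    have h2 := hall G2.1 (hFconn _ G2.2) s t'
    rw [h] at h1
    exact propext (h1.symm.trans h2)
  have hle : Nat.card F ≤ Nat.card (Fin b → Bool) := Nat.card_le_card_of_injective _ hinj2
  have hcb : Nat.card (Fin b → Bool) = 2 ^ b := by
    simp [Nat.card_eq_fintype_card]
  have hlt : (2 : ℕ) ^ b < 2 ^ (p * (k / 2 * ((k + 1) / 2))) :=
    Nat.pow_lt_pow_right (by norm_num) hb
  omega
end
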